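/- arXiv:1802.04608 — 5 statements merged into one kernel-verified Lean document; each statement's English description precedes it below -/
import Mathlib

section
/- Let n and r be positive integers and suppose the cardinality |S(n,r)| of the Lee sphere is a prime p. Then there exists a PL(n,r)-code (not assumed linear) if and only if there exists a group homomorphism φ : ℤ^n → C_p, where C_p is the cyclic group of order p, whose restriction to S(n,r) is a bijection onto C_p. -/
/-- The Lee sphere of radius `r` in `ℤ^n`. -/
def LeeSphere (n r : ℕ) : Set (Fin n → ℤ) :=
  {x | (∑ i, |x i|) ≤ (r : ℤ)}

/-- `C` is a `PL(n,r)`-code (not assumed linear): a subset of `ℤ^n` such that every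
point of `ℤ^n` is within Lee distance `r` of exactly one codeword. -/
def IsPLCode (n r : ℕ) (C : Set (Fin n → ℤ)) : Prop :=
  ∀ x : Fin n → ℤ, ∃! c, c ∈ C ∧ (∑ i, |x i - c i|) ≤ (r : ℤ)

/-!
A `PL(n,r)`-code is a set `C` with `S ⊕ C = ℤⁿ`, where `S = S(n,r)` and `|S| = p`. Over `𝔽_p`,
the indicator `w` of `C` satisfies `(∑_{t ∈ S} τ_t) w = 1` and `(∑_{t ∈ S} τ_t) 1 = p = 0`, so the
Frobenius in the group algebra `𝔽_p[ℤⁿ]` gives `∑_{t ∈ S} w(x - p t) = 0` for every `x`. As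
`|S| = p`, the number of `t ∈ S` with `x - p t ∈ C` is `0` or `p`, which makes `C` invariant
under `pℤⁿ`. Hence `S` and `C` reduce to a tiling `A ⊕ B = 𝔽_pⁿ` with `|A| = p`. If no linear form
were injective on `A`, every character sum over `A` would be nonzero (a vanishing sum of `p`
`p`-th roots of unity takes every root exactly once), so every nontrivial character sum over `B`
would vanish, forcing `|B| ∈ {0, pⁿ}`, against `|A| |B| = pⁿ`. Conversely, the kernel of a
homomorphism that is bijective on `S` is a code.
-/

open Finset Function Set AddSubgroup AddMonoidAlgebra ZMod Polynomial
open scoped translate Pointwise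

lemma Set.InjOn.bijOn_univ_of_ncard_eq {α β : Type*} [Finite β] {f : α → β} {s : Set α}
    (hf : InjOn f s) (hs : s.ncard = Nat.card β) : BijOn f s univ := by
  refine ⟨mapsTo_univ f s, hf, ?_⟩
  rw [SurjOn, univ_subset_iff]
  refine eq_of_subset_of_ncard_le (subset_univ _) ?_
  rw [ncard_univ, hf.ncard_image, hs]

section Complement

variable {G : Type*} [AddCommGroup G] {S T : Set G}

lemma isComplement_iff_existsUnique_sub_mem_right :
    IsComplement S T ↔ ∀ g, ∃! s, s ∈ S ∧ g - s ∈ T := by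
  simp only [isComplement_iff_existsUnique_neg_add_mem, ExistsUnique, Subtype.exists,
    Subtype.forall, Subtype.mk.injEq, neg_add_eq_sub, exists_prop, and_imp, and_assoc]

lemma isComplement_iff_existsUnique_sub_mem_left :
    IsComplement S T ↔ ∀ g, ∃! t, t ∈ T ∧ g - t ∈ S := by
  simp only [isComplement_iff_existsUnique_add_neg_mem, ExistsUnique, Subtype.exists,
    Subtype.forall, Subtype.mk.injEq, ← sub_eq_add_neg, exists_prop, and_imp, and_assoc]

lemma add_mem_of_mem_stabilizer {C : Set G} {k c : G} (hk : k ∈ AddAction.stabilizer G C)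
    (hc : c ∈ C) : k + c ∈ C :=
  AddAction.mem_stabilizer_iff.1 hk ▸ vadd_mem_vadd_set hc

variable {V : Type*} [AddCommGroup V] {f : G →+ V}

lemma AddSubgroup.IsComplement.injOn_of_ker_le_stabilizer (h : IsComplement S T)
    (hf : f.ker ≤ AddAction.stabilizer G T) : InjOn f S := by
  intro s hs s' hs' hss'
  obtain ⟨c, hc⟩ := h.nonempty_right
  have hk : s - s' ∈ f.ker := by rw [AddMonoidHom.mem_ker, map_sub, hss', sub_self]
  obtain ⟨_, _, huniq⟩ := isComplement_iff_existsUnique_sub_mem_right.1 h (s + c)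
  rw [huniq s ⟨hs, by simpa⟩, huniq s' ⟨hs', ?_⟩]
  convert add_mem_of_mem_stabilizer (hf hk) hc using 1
  abel

lemma AddSubgroup.IsComplement.image_of_ker_le_stabilizer (h : IsComplement S T)
    (hsurj : Surjective f) (hf : f.ker ≤ AddAction.stabilizer G T) :
    IsComplement (f '' S) (f '' T) := by
  rw [isComplement_iff_existsUnique_sub_mem_right]
  intro y
  obtain ⟨x, rfl⟩ := hsurj y
  obtain ⟨s, ⟨hs, hxs⟩, huniq⟩ := isComplement_iff_existsUnique_sub_mem_right.1 h x
  refine ⟨f s, ⟨mem_image_of_mem f hs, x - s, hxs, map_sub f x s⟩, ?_⟩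
  rintro _ ⟨⟨s', hs', rfl⟩, c', hc', hfc'⟩
  have hk : x - s' - c' ∈ f.ker := by rw [AddMonoidHom.mem_ker, map_sub, map_sub, hfc', sub_self]
  rw [huniq s' ⟨hs', ?_⟩]
  convert add_mem_of_mem_stabilizer (hf hk) hc' using 1
  abel

lemma isComplement_ker_of_bijOn {φ : G →+ V} (hφ : BijOn φ S univ) : IsComplement S φ.ker := by
  rw [isComplement_iff_existsUnique_sub_mem_right]
  intro g
  obtain ⟨s, hs, hsg⟩ := hφ.surjOn (mem_univ (φ g))
  refine ⟨s, ⟨hs, by simp [hsg]⟩, fun s' ⟨hs', hgs'⟩ => hφ.injOn hs' hs ?_⟩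
  rw [SetLike.mem_coe, AddMonoidHom.mem_ker, map_sub, sub_eq_zero] at hgs'
  rw [← hgs', hsg]

end Complement

section Frobenius

variable {G R : Type*} [AddCommGroup G] [CommRing R]

variable (R) in
noncomputable def translateAlgHom : AddMonoidAlgebra R G →ₐ[R] Module.End R (G → R) :=
  AddMonoidAlgebra.lift R _ G
    { toFun a := LinearMap.funLeft R R (· - a.toAdd)
      map_one' := by ext; simp
      map_mul' a b := by ext; simp [sub_sub] }

lemma translateAlgHom_single (a : G) (w : G → R) :
    translateAlgHom R (single a 1) w = τ a w := by
  rw [translateAlgHom, AddMonoidAlgebra.lift_single, one_smul]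
  rfl

lemma sum_translate_nsmul_eq_zero (p : ℕ) [Fact p.Prime] [CharP R p] (S : Finset G)
    (w : G → R) (hS : (#S : R) = 0) (hw : ∑ t ∈ S, τ t w = 1) :
    ∑ t ∈ S, τ (p • t) w = 0 := by
  have : CharP (AddMonoidAlgebra R G) p := charP_of_injective_algebraMap' R p
  set T := translateAlgHom (G := G) R
  set f : AddMonoidAlgebra R G := ∑ t ∈ S, single t 1
  have hT : ∀ u, T f u = ∑ t ∈ S, τ t u := fun u => by
    simp [f, T, map_sum, translateAlgHom_single]
  have hT_one : T f 1 = 0 := by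
    ext x
    simp [hT, hS]
  have hfrob : f ^ p = ∑ t ∈ S, single (p • t) 1 := by
    simp [f, sum_pow_char, single_pow]
  have hp2 : p = p - 2 + 1 + 1 := by have := (Fact.out : p.Prime).two_le; omega
  calc ∑ t ∈ S, τ (p • t) w = T (f ^ p) w := by
        simp [T, hfrob, map_sum, translateAlgHom_single]
    _ = (T f ^ (p - 2)) (T f (T f w)) := by
        rw [map_pow, hp2, pow_succ, pow_succ]; rfl
    _ = 0 := by rw [hT w, hw, hT_one, map_zero]

lemma AddSubgroup.IsComplement.sum_translate_indicator {S : Finset G} {C : Set G}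
    (h : IsComplement (S : Set G) C) : ∑ t ∈ S, τ t (C.indicator 1) = (1 : G → R) := by
  ext y
  obtain ⟨s, ⟨hs, hys⟩, huniq⟩ := isComplement_iff_existsUnique_sub_mem_right.1 h y
  rw [Finset.sum_apply, Finset.sum_eq_single_of_mem s hs fun t ht hts => ?_]
  · simp [hys]
  · exact indicator_of_notMem (fun hyt => hts (huniq t ⟨ht, hyt⟩)) _

end Frobenius

section Periodicity

variable {G : Type*} [AddCommGroup G] {p : ℕ} [Fact p.Prime] {S : Finset G} {C : Set G}

lemma AddSubgroup.IsComplement.sub_nsmul_mem_of_sub_nsmul_mem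
    (h : IsComplement (S : Set G) C) (hS : #S = p) {x t t' : G} (ht : t ∈ S) (ht' : t' ∈ S)
    (hx : x - p • t ∈ C) : x - p • t' ∈ C := by
  classical
  set F := {u ∈ S | x - p • u ∈ C}
  have hF : (#F : ZMod p) = 0 := by
    have hsum := sum_translate_nsmul_eq_zero p S (C.indicator (1 : G → ZMod p))
      (by rw [hS, ZMod.natCast_self]) h.sum_translate_indicator
    have := congrFun hsum x
    rw [Finset.sum_apply] at this
    simp only [translate_apply, indicator_apply, Pi.one_apply] at this
    rwa [sum_boole] at this
  have hFS : F = S := by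
    refine eq_of_subset_of_card_le (filter_subset _ _) ?_
    rw [hS]
    exact Nat.le_of_dvd (card_pos.2 ⟨t, mem_filter.2 ⟨ht, hx⟩⟩)
      ((ZMod.natCast_eq_zero_iff _ _).1 hF)
  exact (mem_filter.1 (hFS.symm ▸ ht' : t' ∈ F)).2

lemma AddSubgroup.IsComplement.nsmul_sub_mem_stabilizer
    (h : IsComplement (S : Set G) C) (hS : #S = p) {t t' : G} (ht : t ∈ S) (ht' : t' ∈ S) :
    p • (t - t') ∈ AddAction.stabilizer G C := by
  rw [AddAction.mem_stabilizer_iff]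
  ext x
  rw [mem_vadd_set_iff_neg_vadd_mem, vadd_eq_add, neg_add_eq_sub, smul_sub]
  have key : ∀ {u u'}, u ∈ S → u' ∈ S → x + p • t' - p • u ∈ C → x + p • t' - p • u' ∈ C :=
    fun hu hu' => h.sub_nsmul_mem_of_sub_nsmul_mem hS hu hu'
  constructor
  · intro hx
    simpa using key ht ht' (by convert hx using 1; abel)
  · intro hx
    convert key ht' ht (by simpa using hx) using 1
    abel

end Periodicity

lemma AddSubgroup.IsComplement.sum_mul_sum {G M : Type*} [AddGroup G] [Fintype G]
    [CommSemiring M] (ψ : AddChar G M) {A B : Set G} [Fintype A] [Fintype B]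
    (h : IsComplement A B) : (∑ a : A, ψ a) * (∑ b : B, ψ b) = ∑ x, ψ x := by
  rw [Fintype.sum_mul_sum, ← Fintype.sum_prod_type']
  exact Fintype.sum_bijective _ h _ _ fun ab => (ψ.map_add_eq_mul _ _).symm

section Characters

variable {p : ℕ} [Fact p.Prime]

lemma isPrimitiveRoot_stdAddChar_one : IsPrimitiveRoot (stdAddChar (1 : ZMod p)) p := by
  have := stdAddChar_coe (N := p) 1
  push_cast at this
  rw [this, mul_one]
  exact Complex.isPrimitiveRoot_exp p (Fact.out : p.Prime).ne_zero

lemma stdAddChar_eq_pow_val (j : ZMod p) : stdAddChar j = stdAddChar (1 : ZMod p) ^ j.val := by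
  rw [← AddChar.map_nsmul_eq_pow, nsmul_one, natCast_zmod_val]

/-- `1 + ζ + ⋯ + ζ^(p-1) = 0` is the only rational relation among the `p`-th roots of unity,
because `Φ_p = 1 + X + ⋯ + X^(p-1)` is their minimal polynomial. -/
lemma eq_of_sum_mul_stdAddChar_eq_zero {m : ZMod p → ℚ}
    (h : ∑ j, (m j : ℂ) * stdAddChar j = 0) (j k : ZMod p) : m j = m k := by
  have hp := (Fact.out : p.Prime)
  set P : ℚ[X] := ∑ j : ZMod p, C (m j) * X ^ j.val
  have hcoeff : ∀ j : ZMod p, P.coeff j.val = m j := fun j => by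
    simp [P, coeff_X_pow, ZMod.val_injective p |>.eq_iff]
  have hdeg : P.natDegree ≤ (cyclotomic p ℚ).natDegree := by
    rw [natDegree_cyclotomic, Nat.totient_prime hp]
    refine natDegree_sum_le_of_forall_le _ _ fun j _ => (natDegree_C_mul_X_pow_le _ _).trans ?_
    have := j.val_lt; omega
  have hdvd : cyclotomic p ℚ ∣ P := by
    rw [cyclotomic_eq_minpoly_rat isPrimitiveRoot_stdAddChar_one hp.pos]
    refine minpoly.dvd ℚ _ ?_
    rw [← h, map_sum]
    refine sum_congr rfl fun j _ => ?_
    rw [map_mul, aeval_C, map_pow, aeval_X, eq_ratCast, stdAddChar_eq_pow_val j]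
  have hP := eq_leadingCoeff_mul_of_monic_of_dvd_of_natDegree_le (cyclotomic.monic p ℚ) hdvd hdeg
  have hcyc : ∀ j : ZMod p, (cyclotomic p ℚ).coeff j.val = 1 := fun j => by
    simp [cyclotomic_prime, coeff_X_pow, j.val_lt]
  rw [← hcoeff, ← hcoeff, hP, coeff_C_mul, coeff_C_mul, hcyc, hcyc]

lemma injective_of_sum_stdAddChar_eq_zero {α : Type*} [Fintype α] [DecidableEq α]
    (hα : Fintype.card α = p) (f : α → ZMod p) (h : ∑ a, stdAddChar (f a) = 0) :
    Injective f := by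
  set m : ZMod p → ℕ := fun j => #{a | f a = j}
  have hm : ∑ j, ((m j : ℚ) : ℂ) * stdAddChar j = 0 := by
    rw [← h, ← sum_fiberwise univ f]
    refine sum_congr rfl fun j _ => ?_
    rw [sum_congr rfl fun a ha => by rw [(mem_filter.1 ha).2], sum_const, nsmul_eq_mul,
      Rat.cast_natCast]
  have hsum : ∑ j, m j = Fintype.card α := by
    rw [← card_univ]
    exact (card_eq_sum_card_fiberwise fun _ _ => mem_univ _).symm
  have hm_eq : ∀ j, m j = m 0 := fun j => by
    exact_mod_cast eq_of_sum_mul_stdAddChar_eq_zero hm j 0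
  have hm_one : ∀ j, m j = 1 := fun j => by
    rw [hα, sum_congr rfl fun j _ => hm_eq j, sum_const, card_univ, ZMod.card, smul_eq_mul] at hsum
    rw [hm_eq, Nat.eq_of_mul_eq_mul_left (Fact.out : p.Prime).pos (hsum.trans (mul_one p).symm)]
  intro a a' haa'
  exact card_le_one.1 (hm_one (f a)).le a (by simp) a' (by simp [haa'])

variable {ι : Type*} [Fintype ι]

noncomputable def dotProductChar (v : ι → ZMod p) : AddChar (ι → ZMod p) ℂ :=
  stdAddChar.compAddMonoidHom (.mk' (v ⬝ᵥ ·) (dotProduct_add v))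

@[simp]
lemma dotProductChar_apply (v x : ι → ZMod p) : dotProductChar v x = stdAddChar (v ⬝ᵥ x) := rfl

lemma dotProductChar_eq_zero_iff [DecidableEq ι] {v : ι → ZMod p} : dotProductChar v = 0 ↔ v = 0 := by
  refine ⟨fun h => funext fun i => ?_, fun h => by ext; simp [h]⟩
  have hi := DFunLike.congr_fun h (Pi.single i 1)
  rw [AddChar.zero_apply, ← (stdAddChar (N := p)).map_zero_eq_one] at hi
  simpa using injective_stdAddChar hi

lemma sum_dotProductChar [DecidableEq ι] (v : ι → ZMod p) :
    ∑ x, dotProductChar v x = if v = 0 then (p : ℂ) ^ Fintype.card ι else 0 := by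
  classical
  rw [AddChar.sum_eq_ite]
  simp [dotProductChar_eq_zero_iff, ZMod.card]

open Classical in
lemma sum_sum_dotProductChar [DecidableEq ι] (B : Set (ι → ZMod p)) [Fintype B] :
    ∑ v, ∑ b : B, dotProductChar v b.1 = if 0 ∈ B then (p : ℂ) ^ Fintype.card ι else 0 := by
  rw [Finset.sum_comm]
  simp_rw [dotProductChar_apply, dotProduct_comm _ (_ : B).1, ← dotProductChar_apply,
    sum_dotProductChar]
  rw [Finset.sum_set_coe (f := fun b => if b = 0 then (p : ℂ) ^ Fintype.card ι else 0)]
  simp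

theorem exists_addMonoidHom_injOn_of_isComplement [DecidableEq ι] {A B : Set (ι → ZMod p)}
    (hAB : IsComplement A B) (hA : A.ncard = p) :
    ∃ φ : (ι → ZMod p) →+ ZMod p, InjOn φ A := by
  classical
  by_contra! hnot
  have hA_ne : ∀ v, ∑ a : A, dotProductChar v a.1 ≠ 0 := fun v h =>
    hnot (.mk' (v ⬝ᵥ ·) (dotProduct_add v)) <| injOn_iff_injective.2 <|
      injective_of_sum_stdAddChar_eq_zero
        (by rwa [← Nat.card_eq_fintype_card, Nat.card_coe_set_eq]) _ h
  have hB : ∀ v ≠ 0, ∑ b : B, dotProductChar v b.1 = 0 := fun v hv => by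
    have hprod := hAB.sum_mul_sum (dotProductChar v)
    rw [sum_dotProductChar, if_neg hv] at hprod
    exact (mul_eq_zero.1 hprod).resolve_left (hA_ne v)
  have hcount : (Nat.card B : ℂ) = if 0 ∈ B then (p : ℂ) ^ Fintype.card ι else 0 := by
    rw [← sum_sum_dotProductChar, Fintype.sum_eq_single 0 hB]
    simp
  have hcard := hAB.card_mul_card
  rw [Nat.card_coe_set_eq A, hA, Nat.card_fun, Nat.card_zmod,
    Nat.card_eq_fintype_card (α := ι)] at hcard
  have hp := (Fact.out : p.Prime)
  split_ifs at hcount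
  · have hB : Nat.card B = p ^ Fintype.card ι := by exact_mod_cast hcount
    rw [hB] at hcard
    exact hp.one_lt.ne' (Nat.eq_of_mul_eq_mul_right (pow_pos hp.pos _)
      (hcard.trans (one_mul _).symm))
  · have hB : Nat.card B = 0 := by exact_mod_cast hcount
    rw [hB, mul_zero] at hcard
    exact (pow_ne_zero _ hp.ne_zero) hcard.symm

end Characters

lemma ker_intCastAddHom_compLeft_le {ι : Type*} [Fintype ι] [DecidableEq ι] {p : ℕ}
    {H : AddSubgroup (ι → ℤ)} (hH : ∀ i, p • (Pi.single i 1 : ι → ℤ) ∈ H) :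
    ((Int.castAddHom (ZMod p)).compLeft ι).ker ≤ H := by
  intro x hx
  rw [← Finset.univ_sum_single x]
  refine sum_mem fun i _ => ?_
  obtain ⟨q, hq⟩ := (ZMod.intCast_zmod_eq_zero_iff_dvd _ _).1 (congrFun hx i)
  have : Pi.single i (x i) = q • p • (Pi.single i 1 : ι → ℤ) := by
    rw [hq, ← Pi.single_smul, ← Pi.single_smul]
    simp [mul_comm]
  rw [this]
  exact zsmul_mem (hH i) q

section LeeSphere

variable {n r : ℕ}

lemma abs_le_of_mem_leeSphere {x : Fin n → ℤ} (hx : x ∈ LeeSphere n r) (i : Fin n) :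
    |x i| ≤ r :=
  (Finset.single_le_sum (fun j _ => abs_nonneg (x j)) (mem_univ i)).trans hx

lemma leeSphere_finite : (LeeSphere n r).Finite :=
  (Set.Finite.pi fun _ => Set.finite_Icc (-(r : ℤ)) r).subset fun _ hx i _ =>
    abs_le.1 (abs_le_of_mem_leeSphere hx i)

lemma zero_mem_leeSphere : (0 : Fin n → ℤ) ∈ LeeSphere n r := by
  simp [LeeSphere]

lemma single_mem_leeSphere (i : Fin n) {k : ℤ} (hk : |k| ≤ r) : Pi.single i k ∈ LeeSphere n r := by
  show ∑ j, |Pi.single i k j| ≤ (r : ℤ)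
  rwa [Finset.sum_eq_single i (fun j _ hj => by simp [hj]) (by simp), Pi.single_eq_same]

lemma isPLCode_iff_isComplement (C : Set (Fin n → ℤ)) :
    IsPLCode n r C ↔ IsComplement (LeeSphere n r) C := by
  rw [isComplement_iff_existsUnique_sub_mem_left]
  rfl

lemma ker_reduction_le_stabilizer {p : ℕ} [Fact p.Prime] (hr : 0 < r)
    (hcard : (LeeSphere n r).ncard = p) {C : Set (Fin n → ℤ)}
    (hC : IsComplement (LeeSphere n r) C) :
    ((Int.castAddHom (ZMod p)).compLeft (Fin n)).ker ≤ AddAction.stabilizer _ C := by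
  have hfin : (LeeSphere n r).Finite := leeSphere_finite
  have hS : #hfin.toFinset = p := by rw [← hcard, Set.ncard_eq_toFinset_card _ hfin]
  rw [← hfin.coe_toFinset] at hC
  refine ker_intCastAddHom_compLeft_le fun i => ?_
  have hsingle := hfin.mem_toFinset.2 (single_mem_leeSphere i (k := 1) (by simpa))
  simpa using hC.nsmul_sub_mem_stabilizer hS hsingle (hfin.mem_toFinset.2 zero_mem_leeSphere)

end LeeSphere

theorem PL_iff_hom_of_prime_general (n r p : ℕ) (hr : 0 < r) (hp : p.Prime)
    (hcard : (LeeSphere n r).ncard = p) :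
    (∃ C : Set (Fin n → ℤ), IsPLCode n r C) ↔
    (∃ φ : (Fin n → ℤ) →+ ZMod p, Set.BijOn φ (LeeSphere n r) Set.univ) := by
  have := Fact.mk hp
  constructor
  · rintro ⟨C, hC⟩
    set π := (Int.castAddHom (ZMod p)).compLeft (Fin n)
    have hπ : Surjective π := ZMod.intCast_surjective.comp_left
    have hSC := (isPLCode_iff_isComplement C).1 hC
    have hker := ker_reduction_le_stabilizer hr hcard hSC
    have hπS : InjOn π (LeeSphere n r) := hSC.injOn_of_ker_le_stabilizer hker
    obtain ⟨ψ, hψ⟩ := exists_addMonoidHom_injOn_of_isComplement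
      (hSC.image_of_ker_le_stabilizer hπ hker) (by rw [hπS.ncard_image, hcard])
    exact ⟨ψ.comp π, (hψ.comp hπS (mapsTo_image _ _)).bijOn_univ_of_ncard_eq
      (by rw [hcard, Nat.card_zmod])⟩
  · rintro ⟨φ, hφ⟩
    exact ⟨φ.ker, (isPLCode_iff_isComplement _).2 (isComplement_ker_of_bijOn hφ)⟩

/-- If the cardinality of the Lee sphere `S(n,r)` is a prime `p`, then there exists a
`PL(n,r)`-code if and only if there exists a homomorphism `φ : ℤ^n → C_p` whose
restriction to `S(n,r)` is a bijection onto the cyclic group `C_p`. -/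
theorem PL_iff_hom_of_prime (n r p : ℕ) (hn : 0 < n) (hr : 0 < r) (hp : p.Prime)
    (hcard : (LeeSphere n r).ncard = p) :
    (∃ C : Set (Fin n → ℤ), IsPLCode n r C) ↔
    (∃ φ : (Fin n → ℤ) →+ ZMod p, Set.BijOn φ (LeeSphere n r) Set.univ) :=
  PL_iff_hom_of_prime_general n r p hr hp hcard
end

section
/- Let n and r be positive integers. There exists a linear PL(n,r)-code if and only if there exist a finite abelian group G of order |S(n,r)| = Σ_{i=0}^{min(n,r)} 2^i · C(n,i) · C(r,i) and a subset D ⊆ G with D = D^{-1}, 1 ∉ D and |D| = 2n, such that the Cayley graph Γ(G,D) has diameter r. -/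
/-- `C` is a linear `PL(n,r)`-code. -/
def IsLinearPLCode (n r : ℕ) (C : AddSubgroup (Fin n → ℤ)) : Prop :=
  ∀ x : Fin n → ℤ, ∃! c, c ∈ C ∧ (∑ i, |x i - c i|) ≤ (r : ℤ)

/-- The Cayley graph of a group `G` with respect to a connection set `D`. -/
def cayleyGraph (G : Type) [Group G] (D : Set G) : SimpleGraph G :=
  SimpleGraph.fromRel (fun g h => g⁻¹ * h ∈ D)

/-!
A linear `PL(n,r)`-code is a subgroup `C` of `ℤⁿ` for which the Lee ball `S(n,r)` is a set of
coset representatives. Then `G = ℤⁿ/C` has `|S(n,r)|` elements, and for `D` the images of `±eᵢ`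
the word metric of `Γ(G,D)` is the quotient of the Lee metric: every element lies within
distance `r` of `1`, and the image of `r e₀` lies at distance exactly `r`.
Conversely, `|S(n,r)|` is odd, so `D` contains no involution and splits as
`{d₁^{±1}, …, dₙ^{±1}}`. Since the diameter is `r`, the homomorphism `x ↦ ∏ dᵢ^{xᵢ}` maps
`S(n,r)` onto `G`, hence bijectively as `|G| = |S(n,r)|`, and its kernel is the code.
The formula for `|S(n,r)|` follows from the Delannoy recurrence
`|S(n+1,r+1)| = |S(n+1,r)| + |S(n,r+1)| + |S(n,r)|`, got by slicing along the first coordinate.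
-/

open Finset

section LeeBall

def leeNorm {n : ℕ} (x : Fin n → ℤ) : ℕ := ∑ i, (x i).natAbs

noncomputable def leeBall (n r : ℕ) : Finset (Fin n → ℤ) :=
  {x ∈ Fintype.piFinset fun _ => Icc (-(r : ℤ)) r | leeNorm x ≤ r}

variable {n : ℕ}

theorem mem_leeBall {r : ℕ} {x : Fin n → ℤ} : x ∈ leeBall n r ↔ leeNorm x ≤ r := by
  refine mem_filter.trans ⟨And.right, fun h => ⟨Fintype.mem_piFinset.2 fun i => ?_, h⟩⟩
  have : (x i).natAbs ≤ r := (single_le_sum (fun j _ => Nat.zero_le _) (mem_univ i)).trans h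
  rw [mem_Icc]
  omega

theorem natCast_leeNorm (x : Fin n → ℤ) : (leeNorm x : ℤ) = ∑ i, |x i| := by
  simp [leeNorm]

theorem leeNorm_add_le (x y : Fin n → ℤ) : leeNorm (x + y) ≤ leeNorm x + leeNorm y := by
  rw [leeNorm, leeNorm, leeNorm, ← sum_add_distrib]
  exact sum_le_sum fun i _ => Int.natAbs_add_le _ _

@[simp]
theorem leeNorm_single (i : Fin n) (a : ℤ) : leeNorm (Pi.single i a) = a.natAbs := by
  rw [leeNorm, sum_eq_single i (fun j _ hj => by simp [hj]) (by simp)]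
  simp

theorem leeNorm_cons (a : ℤ) (x : Fin n → ℤ) :
    leeNorm (Fin.cons a x : Fin (n + 1) → ℤ) = a.natAbs + leeNorm x := by
  simp [leeNorm, Fin.sum_univ_succ]

theorem leeNorm_eq_zero {x : Fin n → ℤ} : leeNorm x = 0 ↔ x = 0 := by
  simp [leeNorm, funext_iff]

theorem single_mem_leeBall {r : ℕ} (hr : 0 < r) (i : Fin n) {a : ℤ} (ha : a.natAbs = 1) :
    Pi.single i a ∈ leeBall n r := by
  rw [mem_leeBall, leeNorm_single]
  omega

theorem isLinearPLCode_iff {r : ℕ} (C : AddSubgroup (Fin n → ℤ)) :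
    IsLinearPLCode n r C ↔ ∀ x, ∃! b, b ∈ leeBall n r ∧ x - b ∈ C := by
  refine forall_congr' fun x => (Equiv.subLeft x).existsUnique_congr fun c => ?_
  rw [Equiv.subLeft_apply, mem_leeBall, ← Nat.cast_le (α := ℤ), natCast_leeNorm,
    sub_sub_cancel]
  simp only [Pi.sub_apply, and_comm]

end LeeBall

section Counting

theorem sum_Icc_natAbs {M : Type*} [AddCommMonoid M] (F : ℕ → M) (m : ℕ) :
    ∑ a ∈ Icc (-(m : ℤ)) m, F (m - a.natAbs) =
      ∑ k ∈ range m, F k + ∑ k ∈ range (m + 1), F k := by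
  have hsplit : Icc (-(m : ℤ)) m = Icc (-(m : ℤ)) (-1) ∪ Icc 0 (m : ℤ) := by
    ext a
    simp only [mem_Icc, mem_union]
    omega
  rw [hsplit, sum_union (disjoint_left.2 fun a h1 h2 => by simp only [mem_Icc] at h1 h2; omega)]
  congr 1
  · refine sum_nbij' (fun a => m - a.natAbs) (fun k => (k : ℤ) - m) ?_ ?_ ?_ ?_ fun _ _ => rfl
    all_goals intro a ha; simp only [mem_Icc, mem_range] at ha ⊢; omega
  · refine sum_nbij' (fun a => m - a.natAbs) (fun k => ((m - k : ℕ) : ℤ)) ?_ ?_ ?_ ?_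
      fun _ _ => rfl
    all_goals intro a ha; simp only [mem_Icc, mem_range] at ha ⊢; omega

theorem card_leeBall_succ (n m : ℕ) :
    #(leeBall (n + 1) m) = ∑ a ∈ Icc (-(m : ℤ)) m, #(leeBall n (m - a.natAbs)) := by
  rw [← card_sigma]
  refine card_nbij' (fun x => ⟨x 0, Fin.tail x⟩) (fun p => Fin.cons p.1 p.2) ?_ ?_ ?_ ?_
  · intro x hx
    have := leeNorm_cons (x 0) (Fin.tail x)
    simp only [Fin.cons_self_tail, coe_sigma, Set.mem_sigma_iff, mem_coe, mem_Icc,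
      mem_leeBall] at hx this ⊢
    omega
  · rintro ⟨a, x⟩ h
    simp only [coe_sigma, Set.mem_sigma_iff, mem_coe, mem_Icc, mem_leeBall, leeNorm_cons] at h ⊢
    omega
  · intro x _
    simp
  · rintro ⟨a, x⟩ _
    simp

theorem card_leeBall_succ_succ (n m : ℕ) :
    #(leeBall (n + 1) (m + 1)) = #(leeBall (n + 1) m) + #(leeBall n (m + 1)) + #(leeBall n m) := by
  simp only [card_leeBall_succ, sum_Icc_natAbs fun k => #(leeBall n k), sum_range_succ]
  ring

theorem card_leeBall_zero_left (r : ℕ) : #(leeBall 0 r) = 1 :=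
  card_eq_one.2 ⟨0, eq_singleton_iff_unique_mem.2
    ⟨by simp [mem_leeBall, leeNorm], fun _ _ => Subsingleton.elim _ _⟩⟩

theorem card_leeBall_zero_right (n : ℕ) : #(leeBall n 0) = 1 :=
  card_eq_one.2 ⟨0, by ext x; simp [mem_leeBall, leeNorm_eq_zero]⟩

def delannoy (n r : ℕ) : ℕ := ∑ i ∈ range (min n r + 1), 2 ^ i * n.choose i * r.choose i

theorem delannoy_eq_sum_range {n r N : ℕ} (h : min n r < N) :
    delannoy n r = ∑ i ∈ range N, 2 ^ i * n.choose i * r.choose i := by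
  refine sum_subset (range_subset_range.2 h) fun i hN hmin => ?_
  simp only [mem_range] at hN hmin
  rcases Nat.lt_or_ge n i with hi | hi
  · simp [Nat.choose_eq_zero_of_lt hi]
  · simp [Nat.choose_eq_zero_of_lt (show r < i by omega)]

theorem delannoy_zero_left (r : ℕ) : delannoy 0 r = 1 := by
  simp [delannoy]

theorem delannoy_zero_right (n : ℕ) : delannoy n 0 = 1 := by
  simp [delannoy]

theorem delannoy_succ_succ (n r : ℕ) :
    delannoy (n + 1) (r + 1) = delannoy (n + 1) r + delannoy n (r + 1) + delannoy n r := by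
  -- Pascal's rule in both binomials at index `i + 1`; the `i = 0` terms of all sums are `1`
  have pascal : ∀ i, 2 ^ (i + 1) * (n + 1).choose (i + 1) * (r + 1).choose (i + 1)
      + 2 ^ (i + 1) * n.choose (i + 1) * r.choose (i + 1)
      = 2 ^ (i + 1) * (n + 1).choose (i + 1) * r.choose (i + 1)
      + 2 ^ (i + 1) * n.choose (i + 1) * (r + 1).choose (i + 1)
      + 2 * (2 ^ i * n.choose i * r.choose i) := fun i => by
    rw [Nat.choose_succ_succ n i, Nat.choose_succ_succ r i]
    ring
  have hsum := sum_congr rfl fun i (_ : i ∈ range (n + 1)) => pascal i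
  simp only [sum_add_distrib, ← mul_sum] at hsum
  have hnr := delannoy_eq_sum_range (n := n) (r := r) (N := n + 1) (by omega)
  have hnr' := delannoy_eq_sum_range (n := n) (r := r) (N := n + 2) (by omega)
  rw [delannoy_eq_sum_range (N := n + 2) (by omega), delannoy_eq_sum_range (N := n + 2) (by omega),
    delannoy_eq_sum_range (N := n + 2) (by omega)]
  simp only [sum_range_succ' _ (n + 1), pow_zero, Nat.choose_zero_right, mul_one] at hnr' ⊢
  omega

theorem card_leeBall (n r : ℕ) : #(leeBall n r) = delannoy n r := by
  induction n generalizing r with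
  | zero => rw [card_leeBall_zero_left, delannoy_zero_left]
  | succ n ih =>
    induction r with
    | zero => rw [card_leeBall_zero_right, delannoy_zero_right]
    | succ r ihr => rw [card_leeBall_succ_succ, delannoy_succ_succ, ihr, ih, ih]

theorem odd_delannoy (n r : ℕ) : Odd (delannoy n r) := by
  rw [delannoy, sum_range_succ']
  refine (even_sum _ fun i _ => ?_).add_odd (by simp)
  simp [pow_succ, Nat.even_mul]

end Counting

theorem Set.bijOn_univ_iff_existsUnique {α β : Type*} {f : α → β} {s : Set α} :
    Set.BijOn f s Set.univ ↔ ∀ y, ∃! x, x ∈ s ∧ f x = y := by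
  refine ⟨fun h y => ?_,
    fun h => ⟨Set.mapsTo_univ _ _, fun x hx x' hx' hxx' => ?_, fun y _ => ?_⟩⟩
  · obtain ⟨x, hx, rfl⟩ := h.surjOn (Set.mem_univ y)
    exact ⟨x, ⟨hx, rfl⟩, fun x' hx' => h.injOn hx'.1 hx hx'.2⟩
  · exact (h (f x')).unique ⟨hx, hxx'⟩ ⟨hx', rfl⟩
  · obtain ⟨x, hx, -⟩ := h y
    exact ⟨x, hx⟩

section Generators

variable {G : Type} [CommGroup G] {n : ℕ}

def zpowProd (d : Fin n → G) (x : Fin n → ℤ) : G := ∏ i, d i ^ x i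

variable (d : Fin n → G)

@[simp]
theorem zpowProd_zero : zpowProd d 0 = 1 := by
  simp [zpowProd]

theorem zpowProd_add (x y : Fin n → ℤ) : zpowProd d (x + y) = zpowProd d x * zpowProd d y := by
  simp [zpowProd, zpow_add, prod_mul_distrib]

theorem zpowProd_sub (x y : Fin n → ℤ) : zpowProd d (x - y) = zpowProd d x / zpowProd d y := by
  simp [zpowProd, zpow_sub, div_eq_mul_inv, prod_mul_distrib]

@[simp]
theorem zpowProd_single (i : Fin n) (a : ℤ) : zpowProd d (Pi.single i a) = d i ^ a := by
  rw [zpowProd, prod_eq_single i (fun j _ hj => by simp [hj]) (by simp)]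
  simp

def zpowProdKer : AddSubgroup (Fin n → ℤ) where
  carrier := {x | zpowProd d x = 1}
  zero_mem' := zpowProd_zero d
  add_mem' {x y} hx hy := by simp_all [zpowProd_add]
  neg_mem' {x} hx := by
    simp only [Set.mem_ofPred_eq] at hx ⊢
    rw [← zero_sub, zpowProd_sub, hx, zpowProd_zero, div_one]

theorem mem_zpowProdKer {x : Fin n → ℤ} : x ∈ zpowProdKer d ↔ zpowProd d x = 1 :=
  Iff.rfl

theorem isLinearPLCode_zpowProdKer_iff {r : ℕ} (hsurj : Function.Surjective (zpowProd d)) :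
    IsLinearPLCode n r (zpowProdKer d) ↔ Set.BijOn (zpowProd d) (leeBall n r) Set.univ := by
  rw [isLinearPLCode_iff, Set.bijOn_univ_iff_existsUnique, hsurj.forall]
  simp only [mem_zpowProdKer, zpowProd_sub, div_eq_one, eq_comm, mem_coe]

def genSet : Set G := Set.range d ∪ (Set.range d)⁻¹

theorem inv_genSet : (genSet d)⁻¹ = genSet d := by
  rw [genSet, Set.union_inv, inv_inv, Set.union_comm]

theorem genSet_cons (a : G) :
    genSet (Fin.cons a d : Fin (n + 1) → G) = {a, a⁻¹} ∪ genSet d := by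
  rw [genSet, genSet, Fin.range_cons, Set.inv_insert]
  ext
  simp only [Set.mem_union, Set.mem_insert_iff, Set.mem_singleton_iff]
  tauto

theorem one_notMem_genSet (hd : ∀ i, d i ≠ 1) : 1 ∉ genSet d := by
  simpa [genSet, eq_comm] using hd

theorem exists_zpowProd_eq_of_mem_genSet {a : G} (ha : a ∈ genSet d) :
    ∃ y, leeNorm y ≤ 1 ∧ zpowProd d y = a := by
  simp only [genSet, Set.mem_union, Set.mem_inv, Set.mem_range] at ha
  rcases ha with ⟨i, rfl⟩ | ⟨i, hi⟩
  · exact ⟨Pi.single i 1, by simp⟩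
  · exact ⟨Pi.single i (-1), by simp [hi]⟩

theorem exists_zpowProd_eq_of_walk {g h : G} (p : (cayleyGraph G (genSet d)).Walk g h) :
    ∃ x, leeNorm x ≤ p.length ∧ g * zpowProd d x = h := by
  induction p with
  | nil => exact ⟨0, by simp [leeNorm]⟩
  | @cons u v w huv p ih =>
    obtain ⟨x, hx, rfl⟩ := ih
    have huv' : u⁻¹ * v ∈ genSet d := by
      rcases ((SimpleGraph.fromRel_adj _ _ _).1 huv).2 with h | h
      · exact h
      · rw [← inv_genSet]
        simpa using h
    obtain ⟨y, hy, hyuv⟩ := exists_zpowProd_eq_of_mem_genSet d huv'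
    refine ⟨y + x, (leeNorm_add_le y x).trans ?_, ?_⟩
    · simp only [SimpleGraph.Walk.length_cons]
      omega
    rw [zpowProd_add, ← mul_assoc, hyuv, mul_inv_cancel_left]

theorem edist_mul_pow_le {a : G} (ha : a ∈ genSet d) (ha1 : a ≠ 1) (g : G) (m : ℕ) :
    (cayleyGraph G (genSet d)).edist g (g * a ^ m) ≤ m := by
  induction m with
  | zero => simp
  | succ m ih =>
    have hadj : (cayleyGraph G (genSet d)).Adj (g * a ^ m) (g * a ^ (m + 1)) := by
      rw [cayleyGraph, SimpleGraph.fromRel_adj]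
      exact ⟨by simpa [pow_succ] using ha1, Or.inl (by simpa [pow_succ] using ha)⟩
    calc _ ≤ _ := SimpleGraph.edist_triangle
      _ ≤ (m : ℕ∞) + 1 := add_le_add ih (SimpleGraph.edist_eq_one_iff_adj.2 hadj).le
      _ = _ := by push_cast; rfl

theorem edist_mul_zpow_le (hd : ∀ i, d i ≠ 1) (g : G) (i : Fin n) (k : ℤ) :
    (cayleyGraph G (genSet d)).edist g (g * d i ^ k) ≤ k.natAbs := by
  obtain ⟨m, rfl | rfl⟩ := Int.eq_nat_or_neg k
  · simpa using edist_mul_pow_le d (Or.inl ⟨i, rfl⟩) (hd i) g m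
  · simpa using edist_mul_pow_le d (Or.inr (by simp)) (inv_ne_one.2 (hd i)) g m

theorem edist_mul_zpowProd_le (hd : ∀ i, d i ≠ 1) (g : G) (x : Fin n → ℤ) :
    (cayleyGraph G (genSet d)).edist g (g * zpowProd d x) ≤ leeNorm x := by
  suffices ∀ s : Finset (Fin n),
      (cayleyGraph G (genSet d)).edist g (g * ∏ i ∈ s, d i ^ x i) ≤ ∑ i ∈ s, (x i).natAbs by
    exact_mod_cast this univ
  intro s
  induction s using Finset.induction_on generalizing g with
  | empty => simp
  | insert j s hj ih =>
    rw [prod_insert hj, sum_insert hj, ← mul_assoc]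
    calc _ ≤ _ := SimpleGraph.edist_triangle
      _ ≤ _ := add_le_add (edist_mul_zpow_le d hd g j (x j)) (ih _)
      _ = _ := by push_cast; rfl

theorem edist_cayleyGraph_genSet_le_iff (hd : ∀ i, d i ≠ 1) {g h : G} {k : ℕ} :
    (cayleyGraph G (genSet d)).edist g h ≤ k ↔ ∃ x ∈ leeBall n k, g * zpowProd d x = h := by
  constructor
  · intro hk
    obtain ⟨p, hp⟩ := (SimpleGraph.reachable_of_edist_ne_top
      (ne_top_of_le_ne_top (by simp) hk)).exists_walk_length_eq_edist
    obtain ⟨x, hx, hgx⟩ := exists_zpowProd_eq_of_walk d p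
    rw [← hp] at hk
    exact ⟨x, mem_leeBall.2 (hx.trans (by exact_mod_cast hk)), hgx⟩
  · rintro ⟨x, hx, rfl⟩
    exact (edist_mul_zpowProd_le d hd g x).trans (by exact_mod_cast mem_leeBall.1 hx)

theorem ediam_cayleyGraph_genSet_le_iff (hd : ∀ i, d i ≠ 1) {k : ℕ} :
    (cayleyGraph G (genSet d)).ediam ≤ k ↔ ∀ g, ∃ x ∈ leeBall n k, zpowProd d x = g := by
  simp only [SimpleGraph.ediam_le_iff, edist_cayleyGraph_genSet_le_iff d hd]
  refine ⟨fun h g => by simpa using h 1 g, fun h g g' => ?_⟩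
  obtain ⟨x, hx, hgx⟩ := h (g⁻¹ * g')
  exact ⟨x, hx, by rw [hgx, mul_inv_cancel_left]⟩

variable {r : ℕ}

theorem ne_one_of_injOn_zpowProd (h : Set.InjOn (zpowProd d) (leeBall n r)) (hr : 0 < r)
    (i : Fin n) : d i ≠ 1 := by
  intro hi
  have := h (single_mem_leeBall hr i (a := 1) rfl)
    (mem_leeBall.2 (by simp [leeNorm] : leeNorm 0 ≤ r)) (by simp [hi])
  simp at this

theorem ncard_genSet (h : Set.InjOn (zpowProd d) (leeBall n r)) (hr : 0 < r) :
    (genSet d).ncard = 2 * n := by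
  set v : Fin n ⊕ Fin n → Fin n → ℤ :=
    Sum.elim (fun i => Pi.single i 1) fun i => Pi.single i (-1)
  have hv : Function.Injective v := by
    refine Function.Injective.sumElim (fun i j hij => ?_) (fun i j hij => ?_) fun i j hij => ?_
    · simpa [Pi.single_apply] using congrFun hij i
    · simpa [Pi.single_apply] using congrFun hij i
    · have := congrFun hij i
      simp only [Pi.single_eq_same, Pi.single_apply] at this
      split_ifs at this
      omega
  have hgen : genSet d = Set.range (zpowProd d ∘ v) := by
    rw [genSet, Set.inv_range, ← Set.Sum.elim_range]
    congr 1
    ext (i | i) <;> simp [v]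
  rw [hgen, Set.ncard_range_of_injective, Nat.card_sum, Nat.card_eq_fintype_card, Fintype.card_fin]
  · ring
  intro a b hab
  refine hv (h ?_ ?_ hab) <;> rcases a with a | a <;> rcases b with b | b <;>
    exact single_mem_leeBall hr _ rfl

theorem natCard_eq_card_leeBall (h : Set.BijOn (zpowProd d) (leeBall n r) Set.univ) :
    Nat.card G = #(leeBall n r) := by
  rw [← Set.ncard_univ, ← h.image_eq, h.injOn.ncard_image, Set.ncard_coe_finset]

theorem bijOn_zpowProd_of_ediam_le [Finite G] (hd : ∀ i, d i ≠ 1)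
    (hcard : Nat.card G = #(leeBall n r)) (h : (cayleyGraph G (genSet d)).ediam ≤ r) :
    Set.BijOn (zpowProd d) (leeBall n r) Set.univ := by
  have := Fintype.ofFinite G
  have hsurj : Set.SurjOn (zpowProd d) (leeBall n r) Set.univ :=
    fun g _ => (ediam_cayleyGraph_genSet_le_iff d hd).1 h g
  refine ⟨Set.mapsTo_univ _ _, ?_, hsurj⟩
  exact injOn_of_surjOn_of_card_le (t := univ) _ (fun _ _ => mem_coe.2 (mem_univ _))
    (by simpa using hsurj) (by rw [card_univ, ← Nat.card_eq_fintype_card, hcard])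

theorem ediam_cayleyGraph_genSet_eq (hn : 0 < n) (hr : 0 < r)
    (h : Set.BijOn (zpowProd d) (leeBall n r) Set.univ) :
    (cayleyGraph G (genSet d)).ediam = r := by
  have hd := ne_one_of_injOn_zpowProd d h.injOn hr
  set x₀ : Fin n → ℤ := Pi.single ⟨0, hn⟩ r
  refine le_antisymm ((ediam_cayleyGraph_genSet_le_iff d hd).2 fun g => h.surjOn (Set.mem_univ g))
    (le_trans ?_ (SimpleGraph.edist_le_ediam (u := 1) (v := zpowProd d x₀)))
  -- `x₀` is the only preimage of its image in the ball, so it cannot be reached in fewer steps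
  by_contra! hlt
  obtain ⟨k, hk⟩ := ENat.ne_top_iff_exists.1 hlt.ne_top
  obtain ⟨x, hx, hxx₀⟩ := (edist_cayleyGraph_genSet_le_iff d hd).1 hk.ge
  rw [one_mul] at hxx₀
  rw [← hk, Nat.cast_lt] at hlt
  have hx₀ : x₀ ∈ leeBall n r := by simp [mem_leeBall, x₀]
  obtain rfl := h.injOn (mem_leeBall.2 ((mem_leeBall.1 hx).trans hlt.le)) hx₀ hxx₀
  have := mem_leeBall.1 hx
  simp only [leeNorm_single, Int.natAbs_natCast, x₀] at this
  omega

end Generators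

section Pairing

variable {G : Type} [CommGroup G]

theorem inv_ne_self_of_odd_card [Finite G] (hG : Odd (Nat.card G)) {a : G} (ha : a ≠ 1) :
    a⁻¹ ≠ a := by
  intro h
  obtain ⟨k, hk⟩ := hG
  have hsq : a ^ 2 = 1 := by
    rw [sq]
    nth_rewrite 1 [← h]
    exact inv_mul_cancel a
  have hpow : a ^ (2 * k + 1) = 1 := hk ▸ pow_card_eq_one'
  rw [pow_succ, pow_mul, hsq, one_pow, one_mul] at hpow
  exact ha hpow

theorem exists_eq_genSet {m : ℕ} {D : Set G} (hfin : D.Finite) (hD : D⁻¹ = D)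
    (hfix : ∀ a ∈ D, a⁻¹ ≠ a) (hcard : D.ncard = 2 * m) :
    ∃ d : Fin m → G, D = genSet d := by
  induction m generalizing D with
  | zero => exact ⟨Fin.elim0, by simp_all [genSet, Set.ncard_eq_zero hfin]⟩
  | succ m ih =>
    obtain ⟨a, ha⟩ := Set.nonempty_of_ncard_ne_zero (by omega : D.ncard ≠ 0)
    have hpair : {a, a⁻¹} ⊆ D :=
      Set.insert_subset ha (Set.singleton_subset_iff.2 (by rw [← hD]; simpa using ha))
    have hD' : (D \ {a, a⁻¹})⁻¹ = D \ {a, a⁻¹} := by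
      rw [Set.sdiff_eq, Set.inter_inv, Set.compl_inv, hD, Set.inv_insert, Set.inv_singleton,
        inv_inv, Set.pair_comm]
    have hcard' : (D \ {a, a⁻¹}).ncard = 2 * m := by
      rw [Set.ncard_sdiff hpair, Set.ncard_pair (hfix a ha).symm, hcard]
      omega
    obtain ⟨d, hd⟩ := ih hfin.sdiff hD' (fun b hb => hfix b hb.1) hcard'
    exact ⟨Fin.cons a d, by rw [genSet_cons, ← hd, Set.union_sdiff_cancel hpair]⟩

end Pairing

section Quotient

variable {n : ℕ} (C : AddSubgroup (Fin n → ℤ))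

def quotientGens : Fin n → Multiplicative ((Fin n → ℤ) ⧸ C) :=
  fun i => .ofAdd (Pi.single i 1 : Fin n → ℤ)

theorem zpowProd_quotientGens (x : Fin n → ℤ) :
    zpowProd (quotientGens C) x = .ofAdd (x : (Fin n → ℤ) ⧸ C) := by
  conv_rhs => rw [← univ_sum_single x, ← QuotientAddGroup.mk'_apply, map_sum, ofAdd_sum]
  refine prod_congr rfl fun i _ => ?_
  rw [quotientGens, ← ofAdd_zsmul, QuotientAddGroup.mk'_apply, ← QuotientAddGroup.mk_zsmul,
    ← Pi.single_smul', smul_eq_mul, mul_one]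

theorem zpowProdKer_quotientGens : zpowProdKer (quotientGens C) = C := by
  ext x
  rw [mem_zpowProdKer, zpowProd_quotientGens, ofAdd_eq_one, QuotientAddGroup.eq_zero_iff]

theorem surjective_zpowProd_quotientGens : Function.Surjective (zpowProd (quotientGens C)) := by
  intro g
  obtain ⟨x, hx⟩ := QuotientAddGroup.mk_surjective g.toAdd
  exact ⟨x, by rw [zpowProd_quotientGens, hx, ofAdd_toAdd]⟩

end Quotient

/-- There exists a linear `PL(n,r)`-code if and only if there exist a finite abelian group `G`
of order `|S(n,r)| = ∑_{i=0}^{min(n,r)} 2^i C(n,i) C(r,i)` and a subset `D ⊆ G` with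
`D = D⁻¹`, `1 ∉ D`, `|D| = 2n`, such that the Cayley graph `Γ(G,D)` has diameter `r`. -/
theorem linear_PL_iff_cayley (n r : ℕ) (hn : 0 < n) (hr : 0 < r) :
    (∃ C : AddSubgroup (Fin n → ℤ), IsLinearPLCode n r C) ↔
    (∃ (G : Type) (_ : CommGroup G) (_ : Fintype G) (D : Set G),
      Nat.card G = ∑ i ∈ Finset.range (min n r + 1), 2 ^ i * n.choose i * r.choose i ∧
      D⁻¹ = D ∧ (1 : G) ∉ D ∧ D.ncard = 2 * n ∧
      (cayleyGraph G D).diam = r) := by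
  rw [← delannoy.eq_1, ← card_leeBall]
  constructor
  · rintro ⟨C, hC⟩
    rw [← zpowProdKer_quotientGens C,
      isLinearPLCode_zpowProdKer_iff _ (surjective_zpowProd_quotientGens C)] at hC
    have hcard := natCard_eq_card_leeBall _ hC
    have : Finite (Multiplicative ((Fin n → ℤ) ⧸ C)) :=
      Nat.finite_of_card_ne_zero (by rw [hcard, card_leeBall]; exact (odd_delannoy n r).pos.ne')
    refine ⟨_, inferInstance, Fintype.ofFinite _, genSet (quotientGens C), hcard, inv_genSet _,
      one_notMem_genSet _ (ne_one_of_injOn_zpowProd _ hC.injOn hr),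
      ncard_genSet _ hC.injOn hr, ?_⟩
    rw [SimpleGraph.diam, ediam_cayleyGraph_genSet_eq _ hn hr hC, ENat.toNat_natCast]
  · rintro ⟨G, _, _, D, hcard, hD, h1, hDcard, hdiam⟩
    have hodd : Odd (Nat.card G) := hcard ▸ card_leeBall n r ▸ odd_delannoy n r
    obtain ⟨d, rfl⟩ := exists_eq_genSet D.toFinite hD
      (fun a ha => inv_ne_self_of_odd_card hodd (ne_of_mem_of_not_mem ha h1)) hDcard
    have hd : ∀ i, d i ≠ 1 := fun i hi => h1 (hi ▸ Or.inl ⟨i, rfl⟩)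
    have hediam : (cayleyGraph G (genSet d)).ediam = r := by
      rw [← hdiam, SimpleGraph.diam,
        ENat.natCast_toNat (SimpleGraph.ediam_ne_top_of_diam_ne_zero (by omega))]
    have hbij := bijOn_zpowProd_of_ediam_le d hd hcard hediam.le
    have hψ : Function.Surjective (zpowProd d) :=
      fun g => (hbij.surjOn (Set.mem_univ g)).imp fun _ => And.right
    exact ⟨zpowProdKer d, (isLinearPLCode_zpowProdKer_iff d hψ).2 hbij⟩
end

section
/- Let n be a positive integer with 5 ∣ 2n²+2n+1 and set m = (2n²+2n+1)/5. Assume that 8n+1 is not a perfect square and that 8n−3 ≠ 5k² for every integer k. Then there is no element T̄ ∈ ℤ[C_5] whose coefficients all lie in {0,1,…,m} and sum to 2n+1, satisfying T̄ = T̄^{(−1)} and T̄² = 2m·C_5 − T̄^{(2)} + 2n in ℤ[C_5]. -/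
/-- For `T = ∑ a_g·g` in the group ring `ℤ[G]` and `t : ℤ`,
`pw T t` is `T^{(t)} = ∑ a_g·g^t`. -/
noncomputable def pw {G : Type} [CommGroup G] (T : MonoidAlgebra ℤ G) (t : ℤ) :
    MonoidAlgebra ℤ G :=
  MonoidAlgebra.ofCoeff (Finsupp.mapDomain (fun g => g ^ t) T.coeff)

/-- The group-ring element `∑_{g ∈ G} g` of `ℤ[G]`. -/
noncomputable def gsum (G : Type) [CommGroup G] [Fintype G] : MonoidAlgebra ℤ G :=
  ∑ g : G, MonoidAlgebra.of ℤ G g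

/-- The cyclic group of order 5, written multiplicatively. -/
abbrev C5 := Multiplicative (ZMod 5)

/-!
By symmetry `T̄` has coefficients `a, b, c` at `1, g^{±1}, g^{±2}`. Comparing the coefficients of
`T̄²` at `1, g, g²` gives three quadratic equations; the difference of the last two factors as
`(b - c)(2a - b - c - 1) = 0`. If `b = c`, the first two give `(2(a - b) + 1)² = 8n + 1`.
Otherwise `2a = b + c + 1`, the coefficient sum forces `5a = 2n + 3`, and eliminating `bc`
with `5m = 2n² + 2n + 1` gives `8n - 3 = 5(b - c)²`.
-/

open MonoidAlgebra Multiplicative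

section GroupRing

variable {G : Type}

theorem coeff_mul_eq_sum_div {R : Type*} [Semiring R] [Group G] [Fintype G]
    (x y : MonoidAlgebra R G) (g : G) :
    (x * y).coeff g = ∑ h, x.coeff (g / h) * y.coeff h := by
  simp [coeff_mul_apply_right, Finsupp.sum_fintype, div_eq_mul_inv]

theorem coeff_natCast_mul {R : Type*} [Semiring R] [Monoid G] (k : ℕ) (x : MonoidAlgebra R G)
    (g : G) : ((k : MonoidAlgebra R G) * x).coeff g = k * x.coeff g := by
  rw [← nsmul_eq_mul, coeff_smul, Finsupp.smul_apply, nsmul_eq_mul]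

theorem coeff_natCast_apply {R : Type*} [Semiring R] [Monoid G] [DecidableEq G] (k : ℕ) (g : G) :
    (k : MonoidAlgebra R G).coeff g = if g = 1 then (k : R) else 0 := by
  rw [coeff_natCast, Finsupp.single_apply]
  exact if_congr eq_comm rfl rfl

theorem coeff_gsum [CommGroup G] [Fintype G] (g : G) : (gsum G).coeff g = 1 := by
  classical
  simp [gsum, coeff_sum, of_apply, coeff_single, Finsupp.single_apply]

theorem coeff_pw_zpow [CommGroup G] (T : MonoidAlgebra ℤ G) {t : ℤ}
    (ht : Function.Injective fun g : G => g ^ t) (g : G) : (pw T t).coeff (g ^ t) = T.coeff g :=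
  Finsupp.mapDomain_apply ht _ _

theorem coeff_inv_of_eq_pw_neg_one [CommGroup G] {T : MonoidAlgebra ℤ G} (hT : T = pw T (-1))
    (g : G) : T.coeff g⁻¹ = T.coeff g := by
  have hinj : Function.Injective fun g : G => g ^ (-1 : ℤ) := by
    simpa only [zpow_neg_one] using inv_injective
  conv_lhs => rw [hT, ← zpow_neg_one]
  exact coeff_pw_zpow T hinj g

end GroupRing

theorem sum_zmod_five {M : Type*} [AddCommMonoid M] (F : ZMod 5 → M) :
    ∑ i, F i = F 0 + F 1 + F 2 + F 3 + F 4 :=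
  Fin.sum_univ_five F

theorem coeff_pw_two_C5 (T : MonoidAlgebra ℤ C5) (x : ZMod 5) :
    (pw T 2).coeff (ofAdd x) = T.coeff (ofAdd (3 * x)) := by
  have hsq : ofAdd x = ofAdd (3 * x) ^ (2 : ℤ) := by
    rw [← ofAdd_zsmul, zsmul_eq_mul, ← mul_assoc]
    reduce_mod_char
  rw [hsq]
  exact coeff_pw_zpow T (by decide) _

theorem convolution_coeff_of_mul_self_eq {n m : ℕ} {T : MonoidAlgebra ℤ C5}
    (hmul : T * T = ((2 * m : ℕ) : MonoidAlgebra ℤ C5) * gsum C5 - pw T 2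
      + ((2 * n : ℕ) : MonoidAlgebra ℤ C5)) (x : ZMod 5) :
    ∑ i, T.coeff (ofAdd (x - i)) * T.coeff (ofAdd i)
      = 2 * m - T.coeff (ofAdd (3 * x)) + if x = 0 then 2 * (n : ℤ) else 0 := by
  have h := congr(($hmul).coeff (ofAdd x))
  classical
  rw [coeff_mul_eq_sum_div, coeff_add, coeff_sub, Finsupp.add_apply, Finsupp.sub_apply,
    coeff_natCast_mul, coeff_gsum, coeff_pw_two_C5, coeff_natCast_apply] at h
  simp only [Nat.cast_mul, Nat.cast_ofNat, mul_one, ofAdd_eq_one] at h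
  simp only [ofAdd_sub]
  exact h

theorem equations_of_symm_convolution_zmod_five {n m : ℤ} {A : ZMod 5 → ℤ}
    (hneg : ∀ i, A (-i) = A i) (hsum : ∑ i, A i = 2 * n + 1)
    (hconv : ∀ x, ∑ i, A (x - i) * A i = 2 * m - A (3 * x) + if x = 0 then 2 * n else 0) :
    A 0 + 2 * A 1 + 2 * A 2 = 2 * n + 1 ∧
    A 0 ^ 2 + 2 * A 1 ^ 2 + 2 * A 2 ^ 2 = 2 * m - A 0 + 2 * n ∧
    2 * A 0 * A 1 + 2 * A 1 * A 2 + A 2 ^ 2 = 2 * m - A 2 ∧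
    2 * A 0 * A 2 + A 1 ^ 2 + 2 * A 1 * A 2 = 2 * m - A 1 := by
  have h4 : A 4 = A 1 := hneg 1
  have h3 : A 3 = A 2 := hneg 2
  have E0 := hconv 0
  have E1 := hconv 1
  have E2 := hconv 2
  rw [if_pos rfl] at E0
  rw [if_neg (by decide), add_zero] at E1 E2
  simp only [sum_zmod_five] at hsum E0 E1 E2
  reduce_mod_char at E0 E1 E2
  simp only [h4, h3] at hsum E0 E1 E2
  exact ⟨by linear_combination hsum, by linear_combination E0, by linear_combination E1,
    by linear_combination E2⟩

theorem sq_eq_or_eq_five_mul_sq {a b c n m : ℤ} (hm : 5 * m = 2 * n ^ 2 + 2 * n + 1)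
    (hs : a + 2 * b + 2 * c = 2 * n + 1)
    (E0 : a ^ 2 + 2 * b ^ 2 + 2 * c ^ 2 = 2 * m - a + 2 * n)
    (E1 : 2 * a * b + 2 * b * c + c ^ 2 = 2 * m - c)
    (E2 : 2 * a * c + b ^ 2 + 2 * b * c = 2 * m - b) :
    (2 * (a - b) + 1) ^ 2 = 8 * n + 1 ∨ 8 * n - 3 = 5 * (b - c) ^ 2 := by
  by_cases hbc : b = c
  · left
    subst hbc
    linear_combination 4 * E0 - 4 * E1
  · right
    have h2a : 2 * a = b + c + 1 := by
      have : (b - c) * (2 * a - b - c - 1) = 0 := by linear_combination E1 - E2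
      linarith [(mul_eq_zero.mp this).resolve_left (sub_ne_zero.mpr hbc)]
    have h5a : 5 * a = 2 * n + 3 := by linarith
    linear_combination (-8 * n - 20 * a) * h5a + 10 * E1 + 10 * E2
      + (10 * (4 * a + b + c) + 5 * (2 * a + b + c - 1)) * h2a + 8 * hm

theorem no_Tbar_C5_general (n m : ℕ)
    (hm : 5 * m = 2 * n ^ 2 + 2 * n + 1)
    (hsq : ¬ ∃ c : ℕ, c ^ 2 = 8 * n + 1)
    (hk : ∀ k : ℤ, 8 * (n : ℤ) - 3 ≠ 5 * k ^ 2) :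
    ¬ ∃ T : MonoidAlgebra ℤ C5,
        (∀ g : C5, 0 ≤ T.coeff g ∧ T.coeff g ≤ (m : ℤ)) ∧
        (∑ g : C5, T.coeff g) = ((2 * n + 1 : ℕ) : ℤ) ∧
        T = pw T (-1) ∧
        T * T = ((2 * m : ℕ) : MonoidAlgebra ℤ C5) * gsum C5 - pw T 2
          + ((2 * n : ℕ) : MonoidAlgebra ℤ C5) := by
  rintro ⟨T, -, hsum, hsym, hmul⟩
  set A : ZMod 5 → ℤ := fun i => T.coeff (ofAdd i)
  obtain ⟨hs, E0, E1, E2⟩ := equations_of_symm_convolution_zmod_five (A := A)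
    (fun i => coeff_inv_of_eq_pw_neg_one hsym (ofAdd i)) (by exact_mod_cast hsum)
    (convolution_coeff_of_mul_self_eq hmul)
  rcases sq_eq_or_eq_five_mul_sq (by exact_mod_cast hm) hs E0 E1 E2 with h | h
  · exact hsq ⟨(2 * (A 0 - A 1) + 1).natAbs, by exact_mod_cast (Int.natAbs_sq _).trans h⟩
  · exact hk _ h

/-- Suppose `5 ∣ 2n²+2n+1`, `m = (2n²+2n+1)/5`, `8n+1` is not a perfect square, and
`8n−3 ≠ 5k²` for all integers `k`. Then there is no `T̄ ∈ ℤ[C₅]` with coefficients in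
`{0,…,m}` summing to `2n+1` such that `T̄ = T̄^{(−1)}` and `T̄² = 2m·C₅ − T̄^{(2)} + 2n`. -/
theorem no_Tbar_C5 (n m : ℕ) (hn : 0 < n) (h5 : 5 ∣ 2 * n ^ 2 + 2 * n + 1)
    (hm : 5 * m = 2 * n ^ 2 + 2 * n + 1)
    (hsq : ¬ ∃ c : ℕ, c ^ 2 = 8 * n + 1)
    (hk : ∀ k : ℤ, 8 * (n : ℤ) - 3 ≠ 5 * k ^ 2) :
    ¬ ∃ T : MonoidAlgebra ℤ C5,
        (∀ g : C5, 0 ≤ T.coeff g ∧ T.coeff g ≤ (m : ℤ)) ∧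
        (∑ g : C5, T.coeff g) = ((2 * n + 1 : ℕ) : ℤ) ∧
        T = pw T (-1) ∧
        T * T = ((2 * m : ℕ) : MonoidAlgebra ℤ C5) * gsum C5 - pw T 2
          + ((2 * n : ℕ) : MonoidAlgebra ℤ C5) :=
  no_Tbar_C5_general n m hm hsq hk
end

section
/- Let n be a positive integer, p an odd prime dividing 2n, and suppose v = 2n²+2n+1 is prime and that 2 is a primitive root modulo v (the residue class of 2 generates (ℤ/vℤ)ˣ). Let f be the multiplicative order of p modulo v, l = min{i ≥ 1 : p^i ≡ 1 or −1 (mod v)}, and λ = max{r ≥ 1 : r ∣ p^l − 1 and r ∣ 2^i − p^j for all nonnegative integers i, j with (i,j) ≠ (0,0) and 2^i ≡ p^j (mod v)}. Let G be an abelian group of order v. If there exists T ∈ ℤ[G] with all coefficients in {0,1} satisfying T = T^{(-1)} and T² = 2·G − T^{(2)} + 2n in ℤ[G], then there exists an element x of the finite field F_{p^f} with x^λ = 1 such that, with θ(x,y) := Σ_{i=0}^{v−2} (x·y)^{2^i} computed in F_{p^f}, the number of y ∈ F_{p^f} with y^v = 1 and θ(x,y) = 1 equals 2n², and the number of y ∈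 F_{p^f} with y^v = 1 and θ(x,y) = 0 equals 2n+1. -/
/-!
Fix an injective character `ψ : G →* F`; it exists because `v ∣ p ^ f - 1`, and its image is the
group of `v`-th roots of unity. Put `S k = ψ ^ k (T) = ∑ T_g ψ(g) ^ k`. Applying `ψ ^ k` with
`v ∤ k` to `T² = 2 G - T^{(2)} + 2n`, where `ψ ^ k (G) = 0` and `2n = 0` in characteristic `p`,
gives `S (2k) = -(S k)²`, and the Frobenius gives `S (pk) = (S k) ^ p`. So for `x = -S 1` we get
`S (2 ^ i) = -x ^ 2 ^ i` and `S (p ^ j) = -x ^ p ^ j`. As the `2 ^ i` run over the nonzero residues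
mod `v`, orthogonality yields `θ(x, ψ(h)⁻¹) = ∑ T_g - v T_h = 1 - T_h`, and the two counts follow
from the `{0,1}` coefficients of `T`, whose sum is `2n + 1` by the augmentation.
Finally `x ^ p ^ l = x` (using `T = T^{(-1)}` when `p ^ l ≡ -1`) and `x ^ 2 ^ i = x ^ p ^ j`
whenever `2 ^ i ≡ p ^ j`, so the order of `x` lies in the set defining `λ`; that set is closed
under `lcm`, hence the order divides `λ`.
-/

open Finset MonoidAlgebra Function

section GroupRing

variable {G : Type} [CommGroup G] {R : Type*} [CommRing R]

theorem lift_apply_eq_sum [Fintype G] (χ : G →* R) (T : MonoidAlgebra ℤ G) :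
    lift ℤ R G χ T = ∑ g, (T.coeff g : R) * χ g := by
  rw [lift_apply, Finsupp.sum_fintype _ (fun g a => a • χ g) (fun _ => zero_smul ℤ _)]
  simp only [zsmul_eq_mul]

theorem lift_pw (χ : G →* R) (T : MonoidAlgebra ℤ G) (t : ℤ) :
    lift ℤ R G χ (pw T t) = lift ℤ R G (χ.comp (zpowGroupHom t)) T := by
  rw [pw, lift_apply, lift_apply, coeff_ofCoeff,
    Finsupp.sum_mapDomain_index (h := fun g a => a • χ g) (fun _ => zero_smul ℤ _)
      (fun _ _ _ => add_smul _ _ _)]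
  rfl

theorem lift_gsum [Fintype G] (χ : G →* R) : lift ℤ R G χ (gsum G) = ∑ g, χ g := by
  simp only [gsum, map_sum, lift_of]

theorem lift_pow_expChar_pow [Fintype G] (p n : ℕ) [ExpChar R p] (χ : G →* R)
    (T : MonoidAlgebra ℤ G) :
    lift ℤ R G χ T ^ p ^ n = lift ℤ R G (χ ^ p ^ n) T := by
  simp only [lift_apply_eq_sum, sum_pow_char_pow, mul_pow, MonoidHom.pow_apply]
  congr! 2
  exact map_intCast (iterateFrobenius R p n) _

theorem lift_mul_self_of_mul_self_eq [Fintype G] {T : MonoidAlgebra ℤ G} {m : ℕ}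
    (hT : T * T = 2 * gsum G - pw T 2 + (m : MonoidAlgebra ℤ G)) (χ : G →* R) :
    lift ℤ R G χ T * lift ℤ R G χ T = 2 * ∑ g, χ g - lift ℤ R G (χ ^ 2) T + m := by
  have hsq : χ.comp (zpowGroupHom 2) = χ ^ 2 := by
    ext g; simp [pow_two]
  simpa [lift_pw, lift_gsum, hsq, map_ofNat] using congrArg (lift ℤ R G χ) hT

end GroupRing

theorem MonoidHom.pow_eq_comp_zpowGroupHom {G M : Type*} [CommGroup G] [Fintype G] [CommMonoid M]
    (χ : G →* M) {a : ℕ} {t : ℤ} (h : (a : ZMod (Fintype.card G)) = t) :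
    χ ^ a = χ.comp (zpowGroupHom t) := by
  ext g
  rw [MonoidHom.pow_apply, ← map_pow, MonoidHom.comp_apply, zpowGroupHom_apply, ← zpow_natCast,
    ← zpow_mod_card, ← zpow_mod_card g t]
  congr 2
  exact (ZMod.intCast_eq_intCast_iff' _ _ _).mp (by exact_mod_cast h)

theorem MonoidHom.pow_ne_one_of_injective {G M : Type*} [Group G] [Nontrivial G] [CommMonoid M]
    {χ : G →* M} (hχ : Injective χ) {k : ℕ} (hk : (Nat.card G).Coprime k) : χ ^ k ≠ 1 := by
  obtain ⟨g, hg⟩ := exists_ne (1 : G)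
  intro h
  have hgk : g ^ k = 1 ^ k := hχ (by simpa [map_pow] using DFunLike.congr_fun h g)
  exact hg ((powCoprime hk).injective hgk)

theorem sum_range_pow_pow_eq_sum_erase_one {G M : Type*} [Group G] [Fintype G] [DecidableEq G]
    [AddCommMonoid M] {v a : ℕ} [Fact v.Prime] (hG : Fintype.card G = v)
    (ha : orderOf (a : ZMod v) = v - 1) {x : G} (hx : x ≠ 1) (f : G → M) :
    ∑ i ∈ range (v - 1), f (x ^ a ^ i) = ∑ g ∈ univ.erase 1, f g := by
  have hv := (Fact.out : v.Prime).two_le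
  have hx_ord : orderOf x = v := orderOf_eq_prime (hG ▸ pow_card_eq_one) hx
  have ha_unit : IsUnit (a : ZMod v) := (orderOf_pos_iff.mp (by omega)).isUnit
  have hinj : Set.InjOn (fun i => x ^ a ^ i) (range (v - 1)) := by
    intro i hi j hj hij
    have hmod := pow_eq_pow_iff_modEq.mp hij
    rw [hx_ord, ← ZMod.natCast_eq_natCast_iff] at hmod
    push_cast at hmod
    exact pow_injOn_Iio_orderOf (by simpa [ha] using hi) (by simpa [ha] using hj) hmod
  have hmaps : ∀ i, x ^ a ^ i ≠ 1 := by
    intro i h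
    have hdvd := orderOf_dvd_of_pow_eq_one h
    rw [hx_ord, ← ZMod.natCast_eq_zero_iff] at hdvd
    push_cast at hdvd
    exact (ha_unit.pow i).ne_zero hdvd
  have himage : (range (v - 1)).image (fun i => x ^ a ^ i) = univ.erase 1 := by
    refine eq_of_subset_of_card_le (fun y hy => ?_) ?_
    · obtain ⟨i, -, rfl⟩ := mem_image.mp hy
      exact mem_erase.mpr ⟨hmaps i, mem_univ _⟩
    · rw [card_image_of_injOn hinj, card_erase_of_mem (mem_univ _), card_univ, hG, card_range]
  rw [← himage, sum_image hinj]

theorem dvd_pow_orderOf_natCast_sub_one {v p : ℕ} (hp : 0 < p) :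
    v ∣ p ^ orderOf (p : ZMod v) - 1 := by
  rw [← Nat.modEq_iff_dvd' (Nat.one_le_pow _ _ hp), ← ZMod.natCast_eq_natCast_iff]
  simp [pow_orderOf_eq_one]

theorem exists_injective_range_eq_setOf_pow_eq_one {G : Type} [Group G] [IsCyclic G] {F : Type}
    [Field F] [Fintype F] {v : ℕ} [Fact v.Prime] (hG : Nat.card G = v)
    (hvF : v ∣ Fintype.card F - 1) :
    ∃ ψ : G →* F, Injective ψ ∧ Set.range ψ = {y : F | y ^ v = 1} := by
  classical
  obtain ⟨ζ, hζ⟩ := exists_prime_orderOf_dvd_card (G := Fˣ) v (by rwa [Fintype.card_units])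
  have hprim : IsPrimitiveRoot (ζ : F) v := IsPrimitiveRoot.coe_units_iff.mpr (hζ ▸ .orderOf ζ)
  have : NeZero v := ⟨(Fact.out : v.Prime).ne_zero⟩
  let e : G ≃* rootsOfUnity v F := mulEquivOfCyclicCardEq (by rw [hG, hprim.card_rootsOfUnity])
  refine ⟨(Units.coeHom F).comp ((rootsOfUnity v F).subtype.comp e.toMonoidHom),
    Units.val_injective.comp (Subtype.val_injective.comp e.injective), ?_⟩
  ext y
  constructor
  · rintro ⟨g, rfl⟩
    simpa using congrArg Units.val (e g).prop
  · intro hy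
    exact ⟨e.symm (rootsOfUnity.mkOfPowEq y hy), by simp⟩

section Characters

variable {G : Type} [CommGroup G] [Fintype G] {F : Type} [Field F]

theorem sum_range_map_pow_pow [DecidableEq G] {v a : ℕ} [Fact v.Prime] (hG : Fintype.card G = v)
    (ha : orderOf (a : ZMod v) = v - 1) {ψ : G →* F} (hψ : Injective ψ) (x : G) :
    ∑ i ∈ range (v - 1), ψ (x ^ a ^ i) = if x = 1 then (v : F) - 1 else -1 := by
  split_ifs with hx
  · have hv := (Fact.out : v.Prime).one_le
    simp [hx, Nat.cast_sub hv]
  · have hψ1 : ψ ≠ 1 := fun h => hx (hψ (by simp [h]))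
    rw [sum_range_pow_pow_eq_sum_erase_one hG ha hx, sum_erase_eq_sub (mem_univ _),
      sum_hom_units_eq_zero ψ hψ1, map_one, zero_sub]

variable {T : MonoidAlgebra ℤ G} {m : ℕ}

theorem lift_pow_two_pow (hT : T * T = 2 * gsum G - pw T 2 + (m : MonoidAlgebra ℤ G))
    (hm : (m : F) = 0) [Nontrivial G] (hodd : Odd (Nat.card G)) {ψ : G →* F} (hψ : Injective ψ)
    (i : ℕ) : lift ℤ F G (ψ ^ 2 ^ i) T = -(-lift ℤ F G ψ T) ^ 2 ^ i := by
  induction i with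
  | zero => simp
  | succ i ih =>
    have hne : ψ ^ 2 ^ i ≠ 1 := MonoidHom.pow_ne_one_of_injective hψ
      (Nat.Coprime.pow_right _ (Nat.coprime_two_right.mpr hodd))
    have key := lift_mul_self_of_mul_self_eq hT (ψ ^ 2 ^ i)
    rw [sum_hom_units_eq_zero _ hne, hm, ← pow_mul, ih] at key
    rw [pow_succ, pow_mul (-lift ℤ F G ψ T)]
    linear_combination key

theorem lift_pow_prime_pow {p : ℕ} [Fact p.Prime] [CharP F p] (hp : Odd p) (ψ : G →* F) (j : ℕ) :
    lift ℤ F G (ψ ^ p ^ j) T = -(-lift ℤ F G ψ T) ^ p ^ j := by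
  rw [← lift_pow_expChar_pow, (hp.pow).neg_pow, neg_neg]

theorem sum_range_neg_lift_mul_pow_two_pow {v : ℕ} [Fact v.Prime] (hG : Fintype.card G = v)
    (hodd : Odd v) (h2 : orderOf (2 : ZMod v) = v - 1) [Nontrivial G]
    (hT : T * T = 2 * gsum G - pw T 2 + (m : MonoidAlgebra ℤ G)) (hm : (m : F) = 0)
    {ψ : G →* F} (hψ : Injective ψ) (h : G) :
    ∑ i ∈ range (v - 1), (-lift ℤ F G ψ T * ψ h⁻¹) ^ 2 ^ i =
      ∑ g, (T.coeff g : F) - v * T.coeff h := by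
  classical
  have hterm : ∀ i, (-lift ℤ F G ψ T * ψ h⁻¹) ^ 2 ^ i =
      -∑ g, (T.coeff g : F) * ψ ((g * h⁻¹) ^ 2 ^ i) := by
    intro i
    rw [mul_pow, ← neg_neg ((-lift ℤ F G ψ T) ^ 2 ^ i),
      ← lift_pow_two_pow hT hm (by rwa [Nat.card_eq_fintype_card, hG]) hψ]
    simp only [lift_apply_eq_sum, MonoidHom.pow_apply, map_pow, map_mul, mul_pow, neg_mul, sum_mul,
      mul_assoc]
  have hinner := sum_range_map_pow_pow hG (a := 2) (by exact_mod_cast h2) hψ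
  have hite : ∀ g, (if g = h then (v : F) - 1 else -1) = (if g = h then (v : F) else 0) - 1 := by
    intro g; split_ifs <;> ring
  simp only [hterm, sum_neg_distrib]
  rw [sum_comm]
  simp only [← mul_sum, hinner, mul_inv_eq_one, hite, mul_sub, mul_ite, mul_zero, mul_one,
    sum_sub_distrib, sum_ite_eq', mem_univ, if_true]
  ring

theorem neg_lift_pow_pow_eq_of_pow_eq {v p : ℕ} [Fact p.Prime] [CharP F p] (hp : Odd p)
    (hG : Fintype.card G = v) (hodd : Odd v) [Nontrivial G]
    (hT : T * T = 2 * gsum G - pw T 2 + (m : MonoidAlgebra ℤ G)) (hm : (m : F) = 0)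
    {ψ : G →* F} (hψ : Injective ψ) {i j : ℕ} (hij : (2 : ZMod v) ^ i = (p : ZMod v) ^ j) :
    (-lift ℤ F G ψ T) ^ 2 ^ i = (-lift ℤ F G ψ T) ^ p ^ j := by
  subst hG
  have hψij : ψ ^ 2 ^ i = ψ ^ p ^ j := by
    rw [ψ.pow_eq_comp_zpowGroupHom (a := 2 ^ i) (t := ((p ^ j : ℕ) : ℤ)) (by simpa using hij),
      ψ.pow_eq_comp_zpowGroupHom (a := p ^ j) (t := ((p ^ j : ℕ) : ℤ)) (by simp)]
  have := congrArg (fun χ => lift ℤ F G χ T) hψij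
  simp only [lift_pow_two_pow hT hm (by rwa [Nat.card_eq_fintype_card]) hψ,
    lift_pow_prime_pow hp] at this
  exact neg_injective this

theorem neg_lift_pow_pow_eq_self {v p : ℕ} [Fact p.Prime] [CharP F p] (hp : Odd p)
    (hG : Fintype.card G = v) (hTinv : T = pw T (-1)) (ψ : G →* F) {l : ℕ}
    (hl : (p : ZMod v) ^ l = 1 ∨ (p : ZMod v) ^ l = -1) :
    (-lift ℤ F G ψ T) ^ p ^ l = -lift ℤ F G ψ T := by
  subst hG
  rw [← neg_inj, ← lift_pow_prime_pow hp, neg_neg]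
  rcases hl with hl | hl
  · rw [ψ.pow_eq_comp_zpowGroupHom (t := 1) (by simpa using hl)]
    congr 1
    ext g
    simp
  · rw [ψ.pow_eq_comp_zpowGroupHom (t := -1) (by simpa using hl), ← lift_pw, ← hTinv]

end Characters

theorem sum_coeff_eq_of_mul_self_eq {G : Type} [CommGroup G] [Fintype G] {T : MonoidAlgebra ℤ G}
    {n : ℕ} (hT0 : ∀ g, 0 ≤ T.coeff g)
    (hT : T * T = 2 * gsum G - pw T 2 + ((2 * n : ℕ) : MonoidAlgebra ℤ G))
    (hG : Fintype.card G = 2 * n ^ 2 + 2 * n + 1) : ∑ g, T.coeff g = 2 * n + 1 := by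
  have key := lift_mul_self_of_mul_self_eq (R := ℤ) hT 1
  simp only [lift_apply_eq_sum, MonoidHom.one_apply, one_pow, mul_one, sum_const, card_univ, hG,
    nsmul_eq_mul] at key
  push_cast at key
  have hfac : (∑ g, T.coeff g - (2 * n + 1)) * (∑ g, T.coeff g + (2 * n + 2)) = 0 := by
    linear_combination key
  have hpos : 0 < ∑ g, T.coeff g + (2 * n + 2) := by
    have := sum_nonneg fun g (_ : g ∈ univ) => hT0 g
    positivity
  linarith [(mul_eq_zero.mp hfac).resolve_right hpos.ne']

theorem ncard_eq_one_eq_sum {α : Type*} [Fintype α] {a : α → ℤ} (ha : ∀ x, a x = 0 ∨ a x = 1) :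
    ({x | a x = 1}.ncard : ℤ) = ∑ x, a x := by
  classical
  have hbool : ∀ x, a x = if a x = 1 then 1 else 0 := fun x => by
    rcases ha x with h | h <;> simp [h]
  rw [sum_congr rfl fun x _ => hbool x, sum_boole, Set.ncard_eq_toFinset_card', Set.toFinset_ofPred]

theorem ncard_eq_zero_add_ncard_eq_one {α : Type*} [Fintype α] {a : α → ℤ}
    (ha : ∀ x, a x = 0 ∨ a x = 1) :
    {x | a x = 0}.ncard + {x | a x = 1}.ncard = Fintype.card α := by
  have hcompl : {x | a x = 0} = {x | a x = 1}ᶜ := by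
    ext x; rcases ha x with h | h <;> simp [h]
  rw [hcompl, add_comm, Set.ncard_add_ncard_compl, Nat.card_eq_fintype_card]

theorem ncard_setOf_pow_eq_one_and {G : Type} [Group G] {F : Type} [Monoid F] {v : ℕ}
    {ψ : G →* F} (hψ : Injective ψ) (hrange : Set.range ψ = {y : F | y ^ v = 1}) (P : F → Prop) :
    {y : F | y ^ v = 1 ∧ P y}.ncard = {g : G | P (ψ g⁻¹)}.ncard := by
  have himage : {y : F | y ^ v = 1 ∧ P y} = (fun g => ψ g⁻¹) '' {g | P (ψ g⁻¹)} := by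
    ext y
    constructor
    · rintro ⟨hy, hP⟩
      obtain ⟨g, rfl⟩ : y ∈ Set.range ψ := hrange ▸ hy
      exact ⟨g⁻¹, by simpa using hP, by simp⟩
    · rintro ⟨g, hP, rfl⟩
      exact ⟨(Set.ext_iff.mp hrange _).mp (Set.mem_range_self _), hP⟩
  rw [himage]
  exact Set.ncard_image_of_injective _ (hψ.comp inv_injective)

theorem ncard_theta_eq_one_and_ncard_theta_eq_zero {G : Type} [Group G] [Fintype G] {F : Type}
    [Field F] {v : ℕ} {ψ : G →* F} (hψ : Injective ψ) (hrange : Set.range ψ = {y : F | y ^ v = 1})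
    {a : G → ℤ} (ha : ∀ g, a g = 0 ∨ a g = 1) {θ : F → F} (hθ : ∀ g, θ (ψ g⁻¹) = 1 - a g) :
    ({y : F | y ^ v = 1 ∧ θ y = 1}.ncard : ℤ) = Fintype.card G - ∑ g, a g ∧
      ({y : F | y ^ v = 1 ∧ θ y = 0}.ncard : ℤ) = ∑ g, a g := by
  have hset0 : {g : G | θ (ψ g⁻¹) = 1} = {g | a g = 0} := by
    ext g
    change θ (ψ g⁻¹) = 1 ↔ a g = 0
    rw [hθ]
    rcases ha g with h | h <;> simp [h]
  have hset1 : {g : G | θ (ψ g⁻¹) = 0} = {g | a g = 1} := by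
    ext g
    change θ (ψ g⁻¹) = 0 ↔ a g = 1
    rw [hθ]
    rcases ha g with h | h <;> simp [h]
  rw [ncard_setOf_pow_eq_one_and hψ hrange, ncard_setOf_pow_eq_one_and hψ hrange, hset0, hset1,
    ncard_eq_one_eq_sum ha, ← ncard_eq_zero_add_ncard_eq_one ha, ← ncard_eq_one_eq_sum ha]
  constructor <;> push_cast <;> ring

def lambdaSet (v p N : ℕ) : Set ℕ :=
  {r : ℕ | 0 < r ∧ r ∣ N ∧ ∀ i j : ℕ, ¬ (i = 0 ∧ j = 0) → (2 : ZMod v) ^ i = (p : ZMod v) ^ j →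
    (r : ℤ) ∣ 2 ^ i - (p : ℤ) ^ j}

theorem lcm_mem_lambdaSet {v p N a b : ℕ} (ha : a ∈ lambdaSet v p N) (hb : b ∈ lambdaSet v p N) :
    a.lcm b ∈ lambdaSet v p N := by
  obtain ⟨ha0, haN, ha2p⟩ := ha
  obtain ⟨hb0, hbN, hb2p⟩ := hb
  refine ⟨Nat.lcm_pos ha0 hb0, Nat.lcm_dvd haN hbN, fun i j hij h => ?_⟩
  rw [Int.natCast_dvd]
  exact Nat.lcm_dvd (Int.natCast_dvd.mp (ha2p i j hij h)) (Int.natCast_dvd.mp (hb2p i j hij h))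

theorem dvd_of_isGreatest_of_lcm_mem {s : Set ℕ} (hs : ∀ a ∈ s, ∀ b ∈ s, a.lcm b ∈ s)
    {lam a : ℕ} (hlam : IsGreatest s lam) (ha : a ∈ s) (ha0 : a ≠ 0) : a ∣ lam := by
  rcases Nat.eq_zero_or_pos lam with h | h
  · simp [h]
  have hle : a.lcm lam ≤ lam := hlam.2 (hs a ha lam hlam.1)
  have heq : a.lcm lam = lam := le_antisymm hle
    (Nat.le_of_dvd (Nat.lcm_pos (Nat.pos_of_ne_zero ha0) h) (Nat.dvd_lcm_right a lam))
  exact heq ▸ Nat.dvd_lcm_left a lam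

theorem orderOf_mem_lambdaSet {M : Type*} [Group M] [Finite M] {v p N : ℕ} {C : M}
    (hN : C ^ (N + 1) = C)
    (h2p : ∀ i j, (2 : ZMod v) ^ i = (p : ZMod v) ^ j → C ^ 2 ^ i = C ^ p ^ j) :
    orderOf C ∈ lambdaSet v p N := by
  refine ⟨orderOf_pos C, orderOf_dvd_of_pow_eq_one ?_, fun i j _ h => ?_⟩
  · rwa [pow_succ, mul_eq_right] at hN
  · have := (pow_eq_pow_iff_modEq.mp (h2p i j h)).symm
    rw [Nat.modEq_iff_dvd] at this
    exact_mod_cast this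

theorem pow_eq_one_of_isGreatest_lambdaSet {M : Type*} [Group M] [Finite M] {v p N lam : ℕ}
    (hlam : IsGreatest (lambdaSet v p N) lam) {C : M} (hN : C ^ (N + 1) = C)
    (h2p : ∀ i j, (2 : ZMod v) ^ i = (p : ZMod v) ^ j → C ^ 2 ^ i = C ^ p ^ j) : C ^ lam = 1 :=
  orderOf_dvd_iff_pow_eq_one.mp <|
    dvd_of_isGreatest_of_lcm_mem (fun _ ha _ hb => lcm_mem_lambdaSet ha hb) hlam
      (orderOf_mem_lambdaSet hN h2p) (orderOf_pos C).ne'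

theorem neg_lift_pow_eq_one {G : Type} [CommGroup G] [Fintype G] {F : Type} [Field F] [Finite F]
    {T : MonoidAlgebra ℤ G} {v p l lam m : ℕ} [Fact p.Prime] [CharP F p] (hp : Odd p)
    (hG : Fintype.card G = v) (hodd : Odd v) [Nontrivial G]
    (hT : T * T = 2 * gsum G - pw T 2 + (m : MonoidAlgebra ℤ G)) (hm : (m : F) = 0)
    (hTinv : T = pw T (-1)) {ψ : G →* F} (hψ : Injective ψ) (hc : lift ℤ F G ψ T ≠ 0)
    (hl : (p : ZMod v) ^ l = 1 ∨ (p : ZMod v) ^ l = -1)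
    (hlam : IsGreatest (lambdaSet v p (p ^ l - 1)) lam) :
    (-lift ℤ F G ψ T) ^ lam = 1 := by
  have hC := pow_eq_one_of_isGreatest_lambdaSet (C := Units.mk0 _ (neg_ne_zero.mpr hc)) hlam
    (Units.ext ?_) (fun i j hij => Units.ext ?_)
  · simpa using congrArg Units.val hC
  · simpa [Nat.sub_add_cancel (Nat.one_le_pow _ _ (Fact.out : p.Prime).pos)] using
      neg_lift_pow_pow_eq_self hp hG hTinv ψ hl
  · simpa using neg_lift_pow_pow_eq_of_pow_eq hp hG hodd hT hm hψ hij

theorem exists_x_counting_general (n p v f l lam : ℕ)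
    (hp : p.Prime) (hpodd : p ≠ 2) (hpn : p ∣ 2 * n)
    (hv : v = 2 * n ^ 2 + 2 * n + 1) (hvp : v.Prime)
    (h2prim : orderOf (2 : ZMod v) = v - 1)
    (hf : f = orderOf (p : ZMod v))
    (hl : IsLeast {i : ℕ | 0 < i ∧ ((p : ZMod v) ^ i = 1 ∨ (p : ZMod v) ^ i = -1)} l)
    (hlam : IsGreatest {r : ℕ | 0 < r ∧ r ∣ p ^ l - 1 ∧
        ∀ i j : ℕ, ¬ (i = 0 ∧ j = 0) → (2 : ZMod v) ^ i = (p : ZMod v) ^ j →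
          (r : ℤ) ∣ 2 ^ i - (p : ℤ) ^ j} lam)
    (G : Type) [CommGroup G] [Fintype G] (hG : Fintype.card G = v)
    (T : MonoidAlgebra ℤ G)
    (hT01 : ∀ g : G, T.coeff g = 0 ∨ T.coeff g = 1)
    (hTinv : T = pw T (-1))
    (hTsq : T * T = 2 * gsum G - pw T 2 + ((2 * n : ℕ) : MonoidAlgebra ℤ G))
    (F : Type) [Field F] [Fintype F] (hF : Fintype.card F = p ^ f) :
    ∃ x : F, x ^ lam = 1 ∧
      {y : F | y ^ v = 1 ∧ (∑ i ∈ Finset.range (v - 1), (x * y) ^ 2 ^ i) = 1}.ncard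
        = 2 * n ^ 2 ∧
      {y : F | y ^ v = 1 ∧ (∑ i ∈ Finset.range (v - 1), (x * y) ^ 2 ^ i) = 0}.ncard
        = 2 * n + 1 := by
  have : Fact p.Prime := ⟨hp⟩
  have : Fact v.Prime := ⟨hvp⟩
  have hn : n ≠ 0 := by rintro rfl; norm_num [hv] at hvp
  have hodd : Odd v := ⟨n ^ 2 + n, by rw [hv]; ring⟩
  have : Nontrivial G := Fintype.one_lt_card_iff_nontrivial.mp (by rw [hG]; exact hvp.one_lt)
  have : IsCyclic G := isCyclic_of_prime_card (by rw [Nat.card_eq_fintype_card, hG])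
  have : CharP F p := charP_of_card_eq_prime_pow hF
  have h2n : ((2 * n : ℕ) : F) = 0 := (CharP.cast_eq_zero_iff F p _).mpr hpn
  have hvF : (v : F) = 1 := by
    rw [hv]; push_cast at h2n ⊢; linear_combination (n + 1 : F) * h2n
  have hvdvd : v ∣ Fintype.card F - 1 := hF ▸ hf ▸ dvd_pow_orderOf_natCast_sub_one hp.pos
  obtain ⟨ψ, hψ, hrange⟩ :=
    exists_injective_range_eq_setOf_pow_eq_one (G := G) (by rw [Nat.card_eq_fintype_card, hG]) hvdvd
  have hK : ∑ g, T.coeff g = 2 * n + 1 := sum_coeff_eq_of_mul_self_eq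
    (fun g => by rcases hT01 g with h | h <;> simp [h]) hTsq (hG.trans hv)
  have hKF : ∑ g, (T.coeff g : F) = 1 := by
    rw [← Int.cast_sum, hK]; push_cast at h2n ⊢; rw [h2n, zero_add]
  set c := -lift ℤ F G ψ T
  have hθ : ∀ g, ∑ i ∈ range (v - 1), (c * ψ g⁻¹) ^ 2 ^ i = 1 - T.coeff g := fun g => by
    rw [sum_range_neg_lift_mul_pow_two_pow hG hodd h2prim hTsq h2n hψ, hKF, hvF, one_mul]
  obtain ⟨hcount1, hcount0⟩ := ncard_theta_eq_one_and_ncard_theta_eq_zero hψ hrange hT01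
    (θ := fun y => ∑ i ∈ range (v - 1), (c * y) ^ 2 ^ i) hθ
  rw [hK] at hcount1 hcount0
  replace hcount1 := hcount1.trans (show (Fintype.card G : ℤ) - (2 * n + 1) = (2 * n ^ 2 : ℕ) by
    rw [hG, hv]; push_cast; ring)
  have hc0 : lift ℤ F G ψ T ≠ 0 := fun hc => hn (by simpa [c, hc] using hcount1)
  exact ⟨c, neg_lift_pow_eq_one (hp.odd_of_ne_two hpodd) hG hodd hTsq h2n hTinv hψ hc0 hl.1.2 hlam,
    by exact_mod_cast hcount1, by exact_mod_cast hcount0⟩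

/-- Necessary condition (iii) of Theorem 16 (Zhang–Zhou), case `G = H`: with `p` an odd
prime dividing `2n`, `v = 2n²+2n+1` prime, `2` a primitive root mod `v`, `f` the order of
`p` mod `v`, `l = min{i ≥ 1 : p^i ≡ ±1 (mod v)}`, and `λ` as in the theorem:
if `T ∈ ℤ[G]` (with `|G| = v`) has `{0,1}` coefficients, `T = T^{(-1)}` and
`T² = 2·G − T^{(2)} + 2n`, then in `F = F_{p^f}` there is `x` with `x^λ = 1` such that,
with `θ(x,y) = ∑_{i=0}^{v−2} (xy)^{2^i}`, the set `{y : y^v = 1, θ(x,y) = 1}` has `2n²`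
elements and the set `{y : y^v = 1, θ(x,y) = 0}` has `2n+1` elements. -/
theorem exists_x_counting (n p v f l lam : ℕ) (hn : 0 < n)
    (hp : p.Prime) (hpodd : p ≠ 2) (hpn : p ∣ 2 * n)
    (hv : v = 2 * n ^ 2 + 2 * n + 1) (hvp : v.Prime)
    (h2prim : orderOf (2 : ZMod v) = v - 1)
    (hf : f = orderOf (p : ZMod v))
    (hl : IsLeast {i : ℕ | 0 < i ∧ ((p : ZMod v) ^ i = 1 ∨ (p : ZMod v) ^ i = -1)} l)
    (hlam : IsGreatest {r : ℕ | 0 < r ∧ r ∣ p ^ l - 1 ∧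
        ∀ i j : ℕ, ¬ (i = 0 ∧ j = 0) → (2 : ZMod v) ^ i = (p : ZMod v) ^ j →
          (r : ℤ) ∣ 2 ^ i - (p : ℤ) ^ j} lam)
    (G : Type) [CommGroup G] [Fintype G] (hG : Fintype.card G = v)
    (T : MonoidAlgebra ℤ G)
    (hT01 : ∀ g : G, T.coeff g = 0 ∨ T.coeff g = 1)
    (hTinv : T = pw T (-1))
    (hTsq : T * T = 2 * gsum G - pw T 2 + ((2 * n : ℕ) : MonoidAlgebra ℤ G))
    (F : Type) [Field F] [Fintype F] (hF : Fintype.card F = p ^ f) :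
    ∃ x : F, x ^ lam = 1 ∧
      {y : F | y ^ v = 1 ∧ (∑ i ∈ Finset.range (v - 1), (x * y) ^ 2 ^ i) = 1}.ncard
        = 2 * n ^ 2 ∧
      {y : F | y ^ v = 1 ∧ (∑ i ∈ Finset.range (v - 1), (x * y) ^ 2 ^ i) = 0}.ncard
        = 2 * n + 1 :=
  exists_x_counting_general n p v f l lam hp hpodd hpn hv hvp h2prim hf hl hlam G hG T hT01 hTinv
    hTsq F hF
end

section
/- Let G be a finite abelian group of order v and let S = a·1 + b·G ∈ ℤ[G] with a, b ∈ ℤ. Suppose positive integers v, m, n satisfy a + v·b = 2n+1 and m·v = 1 + 6n² + 4n(n−1)(n−2)/3, and that S³ = 6m·G − 3S² − 2S + 6n·S in ℤ[G]. Then either v divides 2n+1, or there exists a nonnegative integer c with c² = 24n+1 such that v divides (c²+6c+29)/12 or v divides (c²−6c+29)/12 (both of these quotients being integers in that case). -/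
section

open MonoidAlgebra

variable {G : Type} [CommGroup G] [Fintype G]

theorem gsum_coeff (x : G) : (gsum G).coeff x = 1 := by
  rw [gsum, coeff_sum, Finset.sum_apply']
  simp [of_apply, coeff_single]

theorem of_mul_gsum (g : G) : of ℤ G g * gsum G = gsum G := by
  rw [gsum, Finset.mul_sum]
  exact Fintype.sum_equiv (Equiv.mulLeft g) _ _ fun h => by simp

theorem gsum_mul_gsum : gsum G * gsum G = (Fintype.card G : ℤ) • gsum G := by
  nth_rw 1 [gsum]
  rw [Finset.sum_mul]
  simp only [of_mul_gsum, Finset.sum_const, Finset.card_univ, natCast_zsmul]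

theorem exists_smul_one_add_smul_gsum_pow_eq (a b : ℤ) (k : ℕ) :
    ∃ q : ℤ, (a • 1 + b • gsum G) ^ k = a ^ k • (1 : MonoidAlgebra ℤ G) + q • gsum G := by
  induction k with
  | zero => exact ⟨0, by simp⟩
  | succ k ih =>
    obtain ⟨q, hq⟩ := ih
    refine ⟨a ^ k * b + q * a + q * b * Fintype.card G, ?_⟩
    rw [pow_succ, hq]
    simp only [add_mul, mul_add, smul_mul_smul_comm, mul_one, one_mul, gsum_mul_gsum, smul_smul]
    module

theorem eq_zero_of_smul_one_add_smul_gsum_eq_zero (hG : 1 < Fintype.card G) {p q : ℤ}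
    (h : p • (1 : MonoidAlgebra ℤ G) + q • gsum G = 0) : p = 0 := by
  obtain ⟨x, hx⟩ := Fintype.exists_ne_of_one_lt_card hG 1
  have h1 := congr_arg (·.coeff 1) h
  have h2 := congr_arg (·.coeff x) h
  simp only [coeff_add, coeff_smul, Finsupp.add_apply, Finsupp.smul_apply, gsum_coeff, one_def,
    coeff_single, Finsupp.single_eq_same, Finsupp.single_eq_of_ne hx, coeff_zero,
    Finsupp.zero_apply, smul_eq_mul] at h1 h2
  linarith

end

theorem exists_sq_eq_and_dvd_of_quadratic (v n : ℕ) (a : ℤ) (ha : a ^ 2 + 3 * a + 2 = 6 * n)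
    (hv : (v : ℤ) ∣ 2 * n + 1 - a) :
    ∃ c : ℕ, c ^ 2 = 24 * n + 1 ∧
      12 ∣ c ^ 2 + 6 * c + 29 ∧ 12 ∣ c ^ 2 + 29 - 6 * c ∧
      (v ∣ (c ^ 2 + 6 * c + 29) / 12 ∨ v ∣ (c ^ 2 + 29 - 6 * c) / 12) := by
  set c := (2 * a + 3).natAbs
  have hc : c ^ 2 = 24 * n + 1 := by
    have : ((c ^ 2 : ℕ) : ℤ) = 24 * n + 1 := by
      rw [Nat.cast_pow, Int.natAbs_sq]
      linear_combination 4 * ha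
    exact_mod_cast this
  obtain ⟨k, hk⟩ : Odd c := (Nat.odd_pow_iff two_ne_zero).mp ⟨12 * n, by rw [hc]; ring⟩
  have hc6 : 6 * c ≤ c ^ 2 + 29 := by nlinarith
  -- `c ^ 2 ± 6 * c + 29 = 6 * (4 * n + 5 ± c)` with `c` odd
  refine ⟨c, hc, by omega, by omega, ?_⟩
  rw [hc] at hc6 ⊢
  rcases Int.natAbs_eq (2 * a + 3) with hca | hca
  · refine .inr (Int.natCast_dvd_natCast.mp ?_)
    convert hv using 1
    omega
  · refine .inl (Int.natCast_dvd_natCast.mp ?_)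
    convert hv using 1
    omega

theorem cubic_gsum_solution_general (G : Type) [CommGroup G] [Fintype G]
    (v m n : ℕ)
    (hcard : Fintype.card G = v) (a b : ℤ)
    (S : MonoidAlgebra ℤ G) (hS : S = a • (1 : MonoidAlgebra ℤ G) + b • gsum G)
    (hab : a + (v : ℤ) * b = 2 * (n : ℤ) + 1)
    (heq : S ^ 3 = ((6 * m : ℕ) : MonoidAlgebra ℤ G) * gsum G - 3 * S ^ 2 - 2 * S
      + ((6 * n : ℕ) : MonoidAlgebra ℤ G) * S) :
    v ∣ 2 * n + 1 ∨
    ∃ c : ℕ, c ^ 2 = 24 * n + 1 ∧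
      12 ∣ c ^ 2 + 6 * c + 29 ∧ 12 ∣ c ^ 2 + 29 - 6 * c ∧
      (v ∣ (c ^ 2 + 6 * c + 29) / 12 ∨ v ∣ (c ^ 2 + 29 - 6 * c) / 12) := by
  obtain rfl | hv := (show 1 ≤ v from hcard ▸ Fintype.card_pos).eq_or_lt
  · exact .inl (one_dvd _)
  obtain ⟨q₂, hq₂⟩ := exists_smul_one_add_smul_gsum_pow_eq (G := G) a b 2
  obtain ⟨q₃, hq₃⟩ := exists_smul_one_add_smul_gsum_pow_eq (G := G) a b 3
  have hcoeff : (a ^ 3 + 3 * a ^ 2 + 2 * a - 6 * n * a) • (1 : MonoidAlgebra ℤ G)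
      + (q₃ + 3 * q₂ + 2 * b - 6 * n * b - 6 * m) • gsum G = 0 := by
    rw [hS, hq₂, hq₃] at heq
    simp only [zsmul_eq_mul, mul_one] at heq ⊢
    push_cast at heq ⊢
    linear_combination heq
  have hvd : (v : ℤ) ∣ 2 * n + 1 - a := ⟨b, by linarith⟩
  have ha : a * (a ^ 2 + 3 * a + 2 - 6 * n) = 0 := by
    linear_combination eq_zero_of_smul_one_add_smul_gsum_eq_zero (hcard ▸ hv) hcoeff
  rcases mul_eq_zero.mp ha with rfl | ha
  · exact .inl (Int.natCast_dvd_natCast.mp (by simpa using hvd))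
  · exact .inr (exists_sq_eq_and_dvd_of_quadratic v n a (by linarith) hvd)

/-- Let `S = a·1 + b·G ∈ ℤ[G]` with `|G| = v`, `a + vb = 2n+1`,
`mv = 1 + 6n² + 4n(n−1)(n−2)/3` (stated multiplied through by 3), and
`S³ = 6m·G − 3S² − 2S + 6n·S`. Then `v ∣ 2n+1`, or `24n+1 = c²` for some `c ≥ 0` and
`v` divides `(c²+6c+29)/12` or `(c²−6c+29)/12` (both quotients being integers). -/
theorem cubic_gsum_solution (G : Type) [CommGroup G] [Fintype G]
    (v m n : ℕ) (hv : 0 < v) (hm : 0 < m) (hn : 0 < n)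
    (hcard : Fintype.card G = v) (a b : ℤ)
    (S : MonoidAlgebra ℤ G) (hS : S = a • (1 : MonoidAlgebra ℤ G) + b • gsum G)
    (hab : a + (v : ℤ) * b = 2 * (n : ℤ) + 1)
    (hmv : 3 * (m * v) = 3 + 18 * n ^ 2 + 4 * n * (n - 1) * (n - 2))
    (heq : S ^ 3 = ((6 * m : ℕ) : MonoidAlgebra ℤ G) * gsum G - 3 * S ^ 2 - 2 * S
      + ((6 * n : ℕ) : MonoidAlgebra ℤ G) * S) :
    v ∣ 2 * n + 1 ∨
    ∃ c : ℕ, c ^ 2 = 24 * n + 1 ∧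
      12 ∣ c ^ 2 + 6 * c + 29 ∧ 12 ∣ c ^ 2 + 29 - 6 * c ∧
      (v ∣ (c ^ 2 + 6 * c + 29) / 12 ∨ v ∣ (c ^ 2 + 29 - 6 * c) / 12) :=
  cubic_gsum_solution_general G v m n hcard a b S hS hab heq
end
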